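/- arXiv:2304.03080 — 8 statements merged into one kernel-verified Lean document; each statement's English description precedes it below -/
import Mathlib

section
/- Let f : [0,∞) → ℝ be a càdlàg function (right-continuous with left limits). Let (g_N)_{N≥1} be a sequence of nondecreasing right-continuous functions from [0,∞) to ℝ, and let g : [0,∞) → ℝ be nondecreasing and continuous, such that g_N → g locally uniformly on [0,∞). Then for every T > 0, ∫_{[0,T]} f(t) dμ_{g_N}(t) → ∫_{[0,T]} f(t) dμ_g(t) as N → ∞, where μ_h denotes the Lebesgue–Stieltjes measure induced by a nondecreasing right-continuous function h. -/
/-!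
On `[0, T]` a càdlàg `f` is uniformly within `ε` of the left-endpoint step function of a finite
partition `0 = t₀ ≤ ⋯ ≤ tₙ = T` (a supremum argument: left limits let a partition reach the
supremum, right continuity lets it go past). Hence, for every Stieltjes measure `μ`, the integral
of `f` over `[0, T]` is within `ε μ [0, T)` of `∑ f(tᵢ) μ [tᵢ, tᵢ₊₁) + f(T) μ {T}`. These masses
are differences of values and left limits of the distribution function, and for monotone `g_N`
converging pointwise to a continuous `g` the left limits converge as well, so the sums for `g_N`
converge to the sum for `g` while the total masses stay bounded.
-/

open MeasureTheory Set Filter Topology Function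

theorem measurable_of_forall_continuousWithinAt_Ici {β : Type*} [TopologicalSpace β]
    [TopologicalSpace.PseudoMetrizableSpace β] [MeasurableSpace β] [BorelSpace β] {f : ℝ → β}
    (hf : ∀ x, ContinuousWithinAt f (Ici x) x) : Measurable f := by
  -- Each approximant factors through `Int.ceil`, hence is measurable.
  refine measurable_of_tendsto_metrizable
    (f := fun (n : ℕ) x => f ((⌈x * ((n : ℝ) + 1)⌉ : ℝ) / ((n : ℝ) + 1))) (fun n => ?_)
    (tendsto_pi_nhds.2 fun x => (hf x).tendsto.comp ?_)
  · exact (measurable_from_top (f := fun k : ℤ => f (k / ((n : ℝ) + 1)))).comp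
      (Int.measurable_ceil.comp (measurable_id.mul_const _))
  have hle : ∀ n : ℕ, x ≤ (⌈x * ((n : ℝ) + 1)⌉ : ℝ) / (n + 1) := fun n => by
    rw [le_div_iff₀ (by positivity)]; exact Int.le_ceil _
  have hge : ∀ n : ℕ, (⌈x * ((n : ℝ) + 1)⌉ : ℝ) / (n + 1) ≤ x + 1 / (n + 1) := fun n => by
    rw [div_le_iff₀ (by positivity), add_mul, one_div_mul_cancel (by positivity)]
    exact (Int.ceil_lt_add_one _).le
  refine tendsto_nhdsWithin_iff.2 ⟨tendsto_of_tendsto_of_tendsto_of_le_of_le tendsto_const_nhds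
    ?_ hle hge, Eventually.of_forall hle⟩
  simpa using tendsto_one_div_add_atTop_nhds_zero_nat.const_add x

theorem aestronglyMeasurable_restrict_Ici_of_continuousWithinAt {f : ℝ → ℝ} {a : ℝ}
    (hf : ∀ x, a ≤ x → ContinuousWithinAt f (Ici x) x) (μ : Measure ℝ) :
    AEStronglyMeasurable f (μ.restrict (Ici a)) := by
  have hmax : Measurable fun x => f (max a x) :=
    measurable_of_forall_continuousWithinAt_Ici fun x =>
      (hf _ (le_max_left a x)).comp (continuous_const.max continuous_id).continuousWithinAt
        fun y hy => max_le_max le_rfl (mem_Ici.1 hy)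
  refine hmax.aestronglyMeasurable.congr (ae_restrict_of_forall_mem measurableSet_Ici ?_)
  intro x hx
  simp only [max_eq_right (mem_Ici.1 hx)]

section StepApprox

variable {f : ℝ → ℝ} {ε a b c : ℝ}

def HasStepApprox (f : ℝ → ℝ) (ε a b : ℝ) : Prop :=
  ∃ (n : ℕ) (t : ℕ → ℝ), Monotone t ∧ t 0 = a ∧ t n = b ∧
    ∀ i < n, ∀ x ∈ Ico (t i) (t (i + 1)), |f x - f (t i)| ≤ ε

theorem HasStepApprox.refl : HasStepApprox f ε a a :=
  ⟨0, fun _ => a, monotone_const, rfl, rfl, fun _ hi => absurd hi (Nat.not_lt_zero _)⟩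

theorem HasStepApprox.extend (h : HasStepApprox f ε a b) (hbc : b ≤ c)
    (hosc : ∀ x ∈ Ico b c, |f x - f b| ≤ ε) : HasStepApprox f ε a c := by
  obtain ⟨n, t, ht, ht0, htn, htosc⟩ := h
  refine ⟨n + 1, fun i => if i ≤ n then t i else c, monotone_nat_of_le_succ fun i => ?_,
    by simp [ht0], by simp, fun i hi x hx => ?_⟩
  · rcases lt_trichotomy i n with hi | rfl | hi
    · simp [hi.le, Nat.succ_le_of_lt hi, ht (Nat.le_succ i)]
    · simp [htn, hbc]
    · simp [hi.not_ge, (hi.trans (Nat.lt_succ_self i)).not_ge]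
  rcases Nat.lt_succ_iff_lt_or_eq.1 hi with hi | rfl
  · simp only [hi.le, Nat.succ_le_of_lt hi, if_true] at hx ⊢
    exact htosc i hi x hx
  · simp only [le_rfl, if_true, Nat.not_succ_le_self, if_false, htn] at hx ⊢
    exact hosc x hx

theorem hasStepApprox_of_cadlag (hab : a ≤ b)
    (hright : ∀ x ∈ Ico a b, ContinuousWithinAt f (Ici x) x)
    (hleft : ∀ x ∈ Ioc a b, ∃ l, Tendsto f (𝓝[<] x) (𝓝 l)) (hε : 0 < ε) :
    HasStepApprox f ε a b := by
  set S := {c ∈ Icc a b | HasStepApprox f ε a c}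
  have haS : a ∈ S := ⟨left_mem_Icc.2 hab, .refl⟩
  have hbdd : BddAbove S := ⟨b, fun c hc => hc.1.2⟩
  set c := sSup S
  have hac : a ≤ c := le_csSup hbdd haS
  have hcb : c ≤ b := csSup_le ⟨a, haS⟩ fun x hx => hx.1.2
  have hcS : HasStepApprox f ε a c := by
    rcases hac.eq_or_lt with hac | hac
    · exact hac ▸ haS.2
    obtain ⟨l, hl⟩ := hleft c ⟨hac, hcb⟩
    obtain ⟨a', ha'c, hl'⟩ := mem_nhdsLT_iff_exists_Ioo_subset.1
      (hl (Metric.closedBall_mem_nhds l (half_pos hε)))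
    obtain ⟨d, hdS, hd⟩ := exists_lt_of_lt_csSup ⟨a, haS⟩ (max_lt ha'c hac)
    refine hdS.2.extend (le_csSup hbdd hdS) fun x hx => ?_
    have ha'd : a' < d := (le_max_left _ _).trans_lt hd
    have hfx : dist (f x) l ≤ ε / 2 := hl' ⟨ha'd.trans_le hx.1, hx.2⟩
    have hfd : dist (f d) l ≤ ε / 2 := hl' ⟨ha'd, hx.1.trans_lt hx.2⟩
    rw [← Real.dist_eq]
    linarith [dist_triangle_right (f x) (f d) l]
  rcases hcb.eq_or_lt with hcb | hcb
  · exact hcb ▸ hcS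
  obtain ⟨u, hcu, hu⟩ := mem_nhdsGE_iff_exists_Ico_subset.1
    (hright c ⟨hac, hcb⟩ (Metric.closedBall_mem_nhds (f c) hε))
  have huS : min u b ∈ S :=
    ⟨⟨hac.trans (le_min hcu.le hcb.le), min_le_right _ _⟩,
      hcS.extend (le_min hcu.le hcb.le) fun x hx => hu ⟨hx.1, hx.2.trans_le (min_le_left _ _)⟩⟩
  exact absurd (le_csSup hbdd huS) (lt_min hcu hcb).not_ge

end StepApprox

section RiemannSum

variable {μ : Measure ℝ} {f : ℝ → ℝ} {s : Set ℝ} {t : ℕ → ℝ} {a b c ε : ℝ}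

theorem abs_setIntegral_sub_measureReal_mul_le (hs : MeasurableSet s) (hμs : μ s ≠ ⊤)
    (hf : AEStronglyMeasurable f (μ.restrict s)) (hfc : ∀ x ∈ s, |f x - c| ≤ ε) :
    IntegrableOn f s μ ∧ |∫ x in s, f x ∂μ - μ.real s * c| ≤ ε * μ.real s := by
  have hint : IntegrableOn f s μ :=
    ⟨hf, .restrict_of_bounded (C := |c| + ε) hμs.lt_top <| ae_restrict_of_forall_mem hs
      fun x hx => by
        rw [Real.norm_eq_abs]
        linarith [abs_sub_abs_le_abs_sub (f x) c, hfc x hx]⟩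
  refine ⟨hint, ?_⟩
  rw [← smul_eq_mul, ← setIntegral_const, ← integral_sub hint (integrableOn_const hμs)]
  exact norm_setIntegral_le_of_norm_le_const (f := fun x => f x - c) hμs.lt_top hfc

variable [IsLocallyFiniteMeasure μ]

theorem abs_setIntegral_Ico_sub_sum_le (ht : Monotone t) {n : ℕ}
    (hf : AEStronglyMeasurable f (μ.restrict (Ici (t 0))))
    (hosc : ∀ i < n, ∀ x ∈ Ico (t i) (t (i + 1)), |f x - f (t i)| ≤ ε) :
    IntegrableOn f (Ico (t 0) (t n)) μ ∧
      |∫ x in Ico (t 0) (t n), f x ∂μ - ∑ i ∈ Finset.range n,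
        μ.real (Ico (t i) (t (i + 1))) * f (t i)| ≤ ε * μ.real (Ico (t 0) (t n)) := by
  induction n with
  | zero => simp
  | succ n ih =>
    obtain ⟨hint, hle⟩ := ih fun i hi => hosc i (by omega)
    obtain ⟨hint', hle'⟩ := abs_setIntegral_sub_measureReal_mul_le measurableSet_Ico
      measure_Ico_lt_top.ne
      (hf.mono_set (Ico_subset_Ici_self.trans (Ici_subset_Ici.2 (ht n.zero_le))))
      (hosc n n.lt_succ_self)
    have hunion := Ico_union_Ico_eq_Ico (ht n.zero_le) (ht n.le_succ)
    refine ⟨hunion ▸ hint.union hint', ?_⟩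
    rw [← hunion, setIntegral_union Ico_disjoint_Ico_same measurableSet_Ico hint hint',
      measureReal_union Ico_disjoint_Ico_same measurableSet_Ico measure_Ico_lt_top.ne
        measure_Ico_lt_top.ne, Finset.sum_range_succ]
    calc _ ≤ |∫ x in Ico (t 0) (t n), f x ∂μ - ∑ i ∈ Finset.range n,
          μ.real (Ico (t i) (t (i + 1))) * f (t i)| +
          |∫ x in Ico (t n) (t (n + 1)), f x ∂μ - μ.real (Ico (t n) (t (n + 1))) * f (t n)| := by
            rw [add_sub_add_comm]; exact abs_add_le _ _
      _ ≤ _ := by rw [mul_add]; exact add_le_add hle hle'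

theorem abs_setIntegral_Icc_sub_sum_le (ht : Monotone t) {n : ℕ} (ht0 : t 0 = a) (htn : t n = b)
    (hf : AEStronglyMeasurable f (μ.restrict (Ici a)))
    (hosc : ∀ i < n, ∀ x ∈ Ico (t i) (t (i + 1)), |f x - f (t i)| ≤ ε) :
    |∫ x in Icc a b, f x ∂μ - (∑ i ∈ Finset.range n, μ.real (Ico (t i) (t (i + 1))) * f (t i)
      + μ.real {b} * f b)| ≤ ε * μ.real (Ico a b) := by
  subst ht0 htn
  obtain ⟨hint, hle⟩ := abs_setIntegral_Ico_sub_sum_le ht hf hosc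
  rw [← Ico_union_right (ht n.zero_le), setIntegral_union (disjoint_singleton_right.2 (by simp))
    (measurableSet_singleton _) hint (integrableOn_singleton (hx := measure_singleton_lt_top)),
    integral_singleton, smul_eq_mul, add_sub_add_right_eq_sub]
  exact hle

end RiemannSum

section Convergence

variable {ι : Type*} {l : Filter ι}

theorem tendsto_leftLim_of_tendsto_of_monotone {u : ι → ℝ → ℝ} (hu : ∀ i, Monotone (u i))
    {g : ℝ → ℝ} {x : ℝ} (hg : ContinuousWithinAt g (Iio x) x)
    (hconv : ∀ y ≤ x, Tendsto (fun i => u i y) l (𝓝 (g y))) :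
    Tendsto (fun i => leftLim (u i) x) l (𝓝 (g x)) := by
  refine tendsto_order.2 ⟨fun r hr => ?_, fun r hr => ?_⟩
  · obtain ⟨y, hry, hyx⟩ := ((hg.eventually (lt_mem_nhds hr)).and self_mem_nhdsWithin).exists
    filter_upwards [(hconv y (le_of_lt hyx)).eventually (lt_mem_nhds hry)] with i hi
    exact hi.trans_le ((hu i).le_leftLim hyx)
  · filter_upwards [(hconv x le_rfl).eventually (gt_mem_nhds hr)] with i hi
    exact ((hu i).leftLim_le le_rfl).trans_lt hi

namespace StieltjesFunction

variable {F : ι → StieltjesFunction ℝ} {G : StieltjesFunction ℝ} {a b : ℝ}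

theorem tendsto_measureReal_Ico
    (ha : Tendsto (fun i => leftLim (F i) a) l (𝓝 (leftLim G a)))
    (hb : Tendsto (fun i => leftLim (F i) b) l (𝓝 (leftLim G b))) :
    Tendsto (fun i => (F i).measure.real (Ico a b)) l (𝓝 (G.measure.real (Ico a b))) := by
  simp only [measureReal_def, measure_Ico, ENNReal.toReal_ofReal']
  exact (hb.sub ha).max tendsto_const_nhds

theorem tendsto_measureReal_singleton
    (ha : Tendsto (fun i => leftLim (F i) a) l (𝓝 (leftLim G a)))
    (ha' : Tendsto (fun i => F i a) l (𝓝 (G a))) :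
    Tendsto (fun i => (F i).measure.real {a}) l (𝓝 (G.measure.real {a})) := by
  simp only [measureReal_def, measure_singleton, ENNReal.toReal_ofReal']
  exact (ha'.sub ha).max tendsto_const_nhds

end StieltjesFunction

theorem tendsto_of_forall_abs_sub_le_mul {I m : ι → ℝ} {I₀ m₀ : ℝ}
    (hm : Tendsto m l (𝓝 m₀))
    (happrox : ∀ ε > 0, ∃ (R : ι → ℝ) (R₀ : ℝ), Tendsto R l (𝓝 R₀) ∧
      (∀ i, |I i - R i| ≤ ε * m i) ∧ |I₀ - R₀| ≤ ε * m₀) :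
    Tendsto I l (𝓝 I₀) := by
  refine Metric.tendsto_nhds.2 fun δ hδ => ?_
  set M := |m₀| + 1
  have hM : 0 < M := by positivity
  obtain ⟨R, R₀, hR, hIR, hIR₀⟩ := happrox (δ / (3 * M)) (by positivity)
  have hεM : δ / (3 * M) * M = δ / 3 := by field_simp
  have hm₀ : δ / (3 * M) * m₀ ≤ δ / 3 :=
    hεM ▸ mul_le_mul_of_nonneg_left ((le_abs_self m₀).trans (lt_add_one _).le) (by positivity)
  filter_upwards [hm.abs.eventually (gt_mem_nhds (lt_add_one |m₀|)),
    Metric.tendsto_nhds.1 hR (δ / 3) (by positivity)] with i hmi hRi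
  have hmi' : δ / (3 * M) * m i ≤ δ / 3 :=
    hεM ▸ mul_le_mul_of_nonneg_left ((le_abs_self _).trans hmi.le) (by positivity)
  rw [Real.dist_eq] at hRi ⊢
  linarith [abs_sub_le (I i) (R i) I₀, abs_sub_le (R i) R₀ I₀, abs_sub_comm R₀ I₀, hIR i]

end Convergence

/-- **Lemma 5.2.** If `f` is càdlàg on `[0,∞)`, `gN` is a sequence of nondecreasing
right-continuous functions on `[0,∞)` (encoded as Stieltjes functions on `ℝ` that are
constant on `(-∞,0]`), `g` is nondecreasing and continuous, and `gN → g` locally uniformly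
on `[0,∞)`, then `∫_{[0,T]} f dμ_{gN} → ∫_{[0,T]} f dμ_g` for every `T > 0`, where `μ_h`
is the Lebesgue–Stieltjes measure of `h`. -/
theorem stieltjes_integral_tendsto_of_tendstoUniformly
    (f : ℝ → ℝ)
    (hf_right : ∀ x : ℝ, 0 ≤ x → ContinuousWithinAt f (Set.Ici x) x)
    (hf_left : ∀ x : ℝ, 0 < x → ∃ l : ℝ, Tendsto f (nhdsWithin x (Set.Iio x)) (nhds l))
    (gN : ℕ → StieltjesFunction ℝ) (g : StieltjesFunction ℝ)
    (hgN_const : ∀ N : ℕ, ∀ x : ℝ, x ≤ 0 → gN N x = gN N 0)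
    (hg_const : ∀ x : ℝ, x ≤ 0 → g x = g 0)
    (hg_cont : Continuous g)
    (hconv : ∀ T : ℝ, 0 < T →
      TendstoUniformlyOn (fun N x => gN N x) g atTop (Set.Icc 0 T)) :
    ∀ T : ℝ, 0 < T →
      Tendsto (fun N => ∫ t in Set.Icc (0:ℝ) T, f t ∂(gN N).measure) atTop
        (nhds (∫ t in Set.Icc (0:ℝ) T, f t ∂g.measure)) := by
  intro T hT
  have hconv_pt : ∀ x, Tendsto (fun N => gN N x) atTop (𝓝 (g x)) := by
    intro x
    rcases le_or_gt x 0 with hx | hx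
    · simpa only [hgN_const _ x hx, hg_const x hx] using
        (hconv 1 one_pos).tendsto_at ⟨le_rfl, zero_le_one⟩
    · exact (hconv x hx).tendsto_at ⟨hx.le, le_rfl⟩
  have hleft : ∀ x, Tendsto (fun N => leftLim (gN N) x) atTop (𝓝 (leftLim g x)) := fun x => by
    rw [hg_cont.continuousWithinAt.leftLim_eq]
    exact tendsto_leftLim_of_tendsto_of_monotone (fun N => (gN N).mono)
      hg_cont.continuousWithinAt fun y _ => hconv_pt y
  have hf_meas := aestronglyMeasurable_restrict_Ici_of_continuousWithinAt hf_right
  refine tendsto_of_forall_abs_sub_le_mul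
    (StieltjesFunction.tendsto_measureReal_Ico (hleft 0) (hleft T)) fun ε hε => ?_
  obtain ⟨n, t, ht, ht0, htn, hosc⟩ := hasStepApprox_of_cadlag hT.le
    (fun x hx => hf_right x hx.1) (fun x hx => hf_left x hx.1) hε
  refine ⟨_, _, ?_, fun N => abs_setIntegral_Icc_sub_sum_le ht ht0 htn (hf_meas _) hosc,
    abs_setIntegral_Icc_sub_sum_le ht ht0 htn (hf_meas _) hosc⟩
  exact (tendsto_finsetSum _ fun i _ =>
    (StieltjesFunction.tendsto_measureReal_Ico (hleft _) (hleft _)).mul_const _).add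
    ((StieltjesFunction.tendsto_measureReal_singleton (hleft T) (hconv_pt T)).mul_const _)
end

section
/- Let (Ω, 𝓕, P) be a probability space, let T, S > 0, and for each N ≥ 1 let X^N : Ω → ([0,∞) × [0,∞) → ℝ) be a random field such that for every N, ε > 0, δ > 0, t ∈ [0,T], s ∈ [0,S], the sets {ω : ∃ (t',s') ∈ [0,T]×[0,S], |X^N(t',s')(ω)| > ε}, {ω : ∃ u ∈ [0,δ], ∃ s' ∈ [0,S], |X^N(t+u,s')(ω) − X^N(t,s')(ω)| > ε}, and {ω : ∃ v ∈ [0,δ], ∃ t' ∈ [0,T], |X^N(t',s+v)(ω) − X^N(t',s)(ω)| > ε} are measurable. Assume: (i) for every ε > 0, sup_{t∈[0,T], s∈[0,S]} P(|X^N(t,s)| > ε) → 0 as N → ∞; (ii) for every ε > 0, limsup_{N→∞} sup_{t∈[0,T]} δ^{-1} · P(∃ u ∈ [0,δ], ∃ s ∈ [0,S] : |X^N(t+u,s) − X^N(t,s)| > ε) → 0 as δ ↓ 0, and likewise limsup_{N→∞} sup_{s∈[0,S]} δ^{-1} · P(∃ v ∈ [0,δ], ∃ t ∈ [0,T] : |X^N(t,s+v)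 − X^N(t,s)| > ε) → 0 as δ ↓ 0. Then for every ε > 0, P(∃ (t,s) ∈ [0,T]×[0,S] : |X^N(t,s)| > ε) → 0 as N → ∞. -/
open MeasureTheory Set Filter
open scoped ENNReal
set_option maxHeartbeats 1000000

/-- **Theorem 5.1.** A convergence-in-probability criterion for random fields indexed by
two nonnegative real parameters (sample paths in `D([0,∞); D([0,∞); ℝ))`). -/
theorem random_field_tendsto_zero_in_probability
    {Ω : Type*} [MeasurableSpace Ω] (P : Measure Ω) [IsProbabilityMeasure P]
    (T S : ℝ) (hT : 0 < T) (hS : 0 < S)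
    (X : ℕ → Ω → ℝ → ℝ → ℝ)
    -- measurability of the relevant events
    (hmeas_pt : ∀ (N : ℕ) (ε : ℝ) (t s : ℝ),
      MeasurableSet {ω : Ω | ε < |X N ω t s|})
    (hmeas_sup : ∀ (N : ℕ) (ε : ℝ),
      MeasurableSet {ω : Ω | ∃ t ∈ Icc (0:ℝ) T, ∃ s ∈ Icc (0:ℝ) S, ε < |X N ω t s|})
    (hmeas_t : ∀ (N : ℕ) (ε δ t : ℝ),
      MeasurableSet {ω : Ω | ∃ u ∈ Icc (0:ℝ) δ, ∃ s ∈ Icc (0:ℝ) S,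
        ε < |X N ω (t + u) s - X N ω t s|})
    (hmeas_s : ∀ (N : ℕ) (ε δ s : ℝ),
      MeasurableSet {ω : Ω | ∃ v ∈ Icc (0:ℝ) δ, ∃ t ∈ Icc (0:ℝ) T,
        ε < |X N ω t (s + v) - X N ω t s|})
    -- condition (i)
    (hi : ∀ ε : ℝ, 0 < ε →
      Tendsto (fun N => ⨆ t : Icc (0:ℝ) T, ⨆ s : Icc (0:ℝ) S,
        P {ω : Ω | ε < |X N ω t s|}) atTop (nhds 0))
    -- condition (ii), increments in the first variable
    (hii_t : ∀ ε : ℝ, 0 < ε →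
      Tendsto (fun δ : ℝ =>
        limsup (fun N => ⨆ t : Icc (0:ℝ) T,
          P {ω : Ω | ∃ u ∈ Icc (0:ℝ) δ, ∃ s ∈ Icc (0:ℝ) S,
            ε < |X N ω (t + u) s - X N ω t s|} / ENNReal.ofReal δ) atTop)
        (nhdsWithin 0 (Set.Ioi 0)) (nhds 0))
    -- condition (ii), increments in the second variable
    (hii_s : ∀ ε : ℝ, 0 < ε →
      Tendsto (fun δ : ℝ =>
        limsup (fun N => ⨆ s : Icc (0:ℝ) S,
          P {ω : Ω | ∃ v ∈ Icc (0:ℝ) δ, ∃ t ∈ Icc (0:ℝ) T,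
            ε < |X N ω t (s + v) - X N ω t s|} / ENNReal.ofReal δ) atTop)
        (nhdsWithin 0 (Set.Ioi 0)) (nhds 0)) :
    ∀ ε : ℝ, 0 < ε →
      Tendsto (fun N =>
        P {ω : Ω | ∃ t ∈ Icc (0:ℝ) T, ∃ s ∈ Icc (0:ℝ) S, ε < |X N ω t s|}) atTop
        (nhds 0) := by
  intro ε hε
  rw [ENNReal.tendsto_atTop_zero]
  intro η hη
  have hε3 : 0 < ε / 3 := by linarith
  have hη3 : (0:ℝ≥0∞) < η / 3 := ENNReal.div_pos hη.ne' (by norm_num)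
  -- the constants used to cut the `t`- and `s`-increment terms
  set cT : ℝ≥0∞ := (η/3) * (ENNReal.ofReal (T+1))⁻¹ with hcTdef
  set cS : ℝ≥0∞ := (η/3) * (ENNReal.ofReal (S+1))⁻¹ with hcSdef
  have hT1 : ENNReal.ofReal (T+1) ≠ 0 := (ENNReal.ofReal_pos.mpr (by linarith)).ne'
  have hS1 : ENNReal.ofReal (S+1) ≠ 0 := (ENNReal.ofReal_pos.mpr (by linarith)).ne'
  have hcT0 : 0 < cT :=
    ENNReal.mul_pos hη3.ne' (ENNReal.inv_ne_zero.mpr ENNReal.ofReal_ne_top)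
  have hcS0 : 0 < cS :=
    ENNReal.mul_pos hη3.ne' (ENNReal.inv_ne_zero.mpr ENNReal.ofReal_ne_top)
  -- choose a small mesh δ ∈ (0,1]
  have hEv := (((hii_t (ε/3) hε3).eventually_lt_const hcT0).and
      ((hii_s (ε/3) hε3).eventually_lt_const hcS0)).and
      (Ioc_mem_nhdsGT_of_mem (left_mem_Ico.mpr one_pos))
  obtain ⟨δ, ⟨h1, h2⟩, hδ0, hδ1⟩ := hEv.exists
  -- grid sizes
  set nt : ℕ := ⌊T/δ⌋₊ + 1 with hntdef
  set ns : ℕ := ⌊S/δ⌋₊ + 1 with hnsdef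
  have hfloorT : (⌊T/δ⌋₊ : ℝ) ≤ T/δ := Nat.floor_le (div_nonneg hT.le hδ0.le)
  have hfloorS : (⌊S/δ⌋₊ : ℝ) ≤ S/δ := Nat.floor_le (div_nonneg hS.le hδ0.le)
  have hTδ : (T/δ) * δ = T := div_mul_cancel₀ T hδ0.ne'
  have hSδ : (S/δ) * δ = S := div_mul_cancel₀ S hδ0.ne'
  have hntδ : (nt:ℝ) * δ ≤ T + 1 := by
    rw [hntdef]; push_cast; nlinarith
  have hnsδ : (ns:ℝ) * δ ≤ S + 1 := by
    rw [hnsdef]; push_cast; nlinarith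
  set cP : ℝ≥0∞ := (η/3) * (((nt*ns : ℕ) : ℝ≥0∞))⁻¹ with hcPdef
  have hK0 : ((nt*ns : ℕ) : ℝ≥0∞) ≠ 0 := by
    simp [hntdef, hnsdef, Nat.succ_ne_zero]
  have hcP0 : 0 < cP :=
    ENNReal.mul_pos hη3.ne' (ENNReal.inv_ne_zero.mpr (ENNReal.natCast_ne_top _))
  -- the three eventual (in N) estimates
  have hAev := eventually_lt_of_limsup_lt h1
  have hBev := eventually_lt_of_limsup_lt h2
  have hCev := (hi (ε/3) hε3).eventually_lt_const hcP0
  obtain ⟨N0, hN0⟩ := eventually_atTop.mp ((hAev.and hBev).and hCev)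
  refine ⟨N0, fun N hN => ?_⟩
  obtain ⟨⟨hA, hB⟩, hC⟩ := hN0 N hN
  set d : ℝ≥0∞ := ENNReal.ofReal δ with hddef
  have hd0 : d ≠ 0 := (ENNReal.ofReal_pos.mpr hδ0).ne'
  have hdT : d ≠ ⊤ := ENNReal.ofReal_ne_top
  -- grid events
  set A : ℕ → Set Ω := fun i => {ω | ∃ u ∈ Icc (0:ℝ) δ, ∃ s ∈ Icc (0:ℝ) S,
    ε/3 < |X N ω ((i:ℝ)*δ + u) s - X N ω ((i:ℝ)*δ) s|} with hAdef
  set B : ℕ → Set Ω := fun j => {ω | ∃ v ∈ Icc (0:ℝ) δ, ∃ t ∈ Icc (0:ℝ) T,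
    ε/3 < |X N ω t ((j:ℝ)*δ + v) - X N ω t ((j:ℝ)*δ)|} with hBdef
  set C : ℕ → ℕ → Set Ω := fun i j => {ω | ε/3 < |X N ω ((i:ℝ)*δ) ((j:ℝ)*δ)|} with hCdef
  -- the key inclusion
  have hsub : {ω : Ω | ∃ t ∈ Icc (0:ℝ) T, ∃ s ∈ Icc (0:ℝ) S, ε < |X N ω t s|} ⊆
      (⋃ i ∈ Finset.range nt, A i) ∪
      ((⋃ j ∈ Finset.range ns, B j) ∪
        ⋃ i ∈ Finset.range nt, ⋃ j ∈ Finset.range ns, C i j) := by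
    rintro ω ⟨t, ht, s, hs, hlt⟩
    set i : ℕ := ⌊t/δ⌋₊ with hidef
    set j : ℕ := ⌊s/δ⌋₊ with hjdef
    have hit : (i:ℝ)*δ ≤ t := by
      have h := Nat.floor_le (div_nonneg ht.1 hδ0.le)
      nlinarith [div_mul_cancel₀ t hδ0.ne']
    have hti : t ≤ (i:ℝ)*δ + δ := by
      have h := (div_lt_iff₀ hδ0).mp (Nat.lt_floor_add_one (t/δ))
      nlinarith
    have hjs : (j:ℝ)*δ ≤ s := by
      have h := Nat.floor_le (div_nonneg hs.1 hδ0.le)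
      nlinarith [div_mul_cancel₀ s hδ0.ne']
    have hsj : s ≤ (j:ℝ)*δ + δ := by
      have h := (div_lt_iff₀ hδ0).mp (Nat.lt_floor_add_one (s/δ))
      nlinarith
    have hint : i ∈ Finset.range nt := by
      refine Finset.mem_range.mpr (Nat.lt_succ_of_le ?_)
      exact Nat.floor_mono (by gcongr; exact ht.2)
    have hjns : j ∈ Finset.range ns := by
      refine Finset.mem_range.mpr (Nat.lt_succ_of_le ?_)
      exact Nat.floor_mono (by gcongr; exact hs.2)
    have hiT : (i:ℝ)*δ ∈ Icc (0:ℝ) T := ⟨by positivity, le_trans hit ht.2⟩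
    have hjS : (j:ℝ)*δ ∈ Icc (0:ℝ) S := ⟨by positivity, le_trans hjs hs.2⟩
    rcases lt_or_ge (ε/3) |X N ω t s - X N ω ((i:ℝ)*δ) s| with hc1 | hc1
    · left
      refine mem_biUnion hint ?_
      refine ⟨t - (i:ℝ)*δ, ⟨by linarith, by linarith⟩, s, hs, ?_⟩
      rwa [show (i:ℝ)*δ + (t - (i:ℝ)*δ) = t by ring]
    rcases lt_or_ge (ε/3) |X N ω ((i:ℝ)*δ) s - X N ω ((i:ℝ)*δ) ((j:ℝ)*δ)| with hc2 | hc2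
    · right; left
      refine mem_biUnion hjns ?_
      refine ⟨s - (j:ℝ)*δ, ⟨by linarith, by linarith⟩, (i:ℝ)*δ, hiT, ?_⟩
      rwa [show (j:ℝ)*δ + (s - (j:ℝ)*δ) = s by ring]
    · right; right
      refine mem_biUnion hint (mem_biUnion hjns ?_)
      have tri : |X N ω t s| ≤ |X N ω t s - X N ω ((i:ℝ)*δ) s|
          + |X N ω ((i:ℝ)*δ) s - X N ω ((i:ℝ)*δ) ((j:ℝ)*δ)|
          + |X N ω ((i:ℝ)*δ) ((j:ℝ)*δ)| := by
        have e1 := abs_add_le (X N ω t s - X N ω ((i:ℝ)*δ) s) (X N ω ((i:ℝ)*δ) s)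
        have e2 := abs_add_le (X N ω ((i:ℝ)*δ) s - X N ω ((i:ℝ)*δ) ((j:ℝ)*δ))
          (X N ω ((i:ℝ)*δ) ((j:ℝ)*δ))
        rw [sub_add_cancel] at e1 e2
        linarith
      show ε/3 < |X N ω ((i:ℝ)*δ) ((j:ℝ)*δ)|
      linarith
  -- the individual probability bounds
  have hAi : ∀ i ∈ Finset.range nt, P (A i) ≤ cT * d := by
    intro i hi'
    have hci : (i:ℝ) ≤ T/δ :=
      le_trans (Nat.cast_le.mpr (Nat.lt_succ_iff.mp (Finset.mem_range.mp hi'))) hfloorT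
    have him : (i:ℝ)*δ ∈ Icc (0:ℝ) T := ⟨by positivity, by nlinarith⟩
    have hle := le_iSup (fun t : Icc (0:ℝ) T =>
      P {ω : Ω | ∃ u ∈ Icc (0:ℝ) δ, ∃ s ∈ Icc (0:ℝ) S,
        ε/3 < |X N ω (↑t + u) s - X N ω ↑t s|} / ENNReal.ofReal δ) ⟨(i:ℝ)*δ, him⟩
    have hlt := lt_of_le_of_lt hle hA
    exact ((ENNReal.div_lt_iff (Or.inl hd0) (Or.inl hdT)).mp hlt).le
  have hBj : ∀ j ∈ Finset.range ns, P (B j) ≤ cS * d := by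
    intro j hj'
    have hcj : (j:ℝ) ≤ S/δ :=
      le_trans (Nat.cast_le.mpr (Nat.lt_succ_iff.mp (Finset.mem_range.mp hj'))) hfloorS
    have hjm : (j:ℝ)*δ ∈ Icc (0:ℝ) S := ⟨by positivity, by nlinarith⟩
    have hle := le_iSup (fun s : Icc (0:ℝ) S =>
      P {ω : Ω | ∃ v ∈ Icc (0:ℝ) δ, ∃ t ∈ Icc (0:ℝ) T,
        ε/3 < |X N ω t (↑s + v) - X N ω t ↑s|} / ENNReal.ofReal δ) ⟨(j:ℝ)*δ, hjm⟩
    have hlt := lt_of_le_of_lt hle hB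
    exact ((ENNReal.div_lt_iff (Or.inl hd0) (Or.inl hdT)).mp hlt).le
  have hCij : ∀ i ∈ Finset.range nt, ∀ j ∈ Finset.range ns, P (C i j) ≤ cP := by
    intro i hi' j hj'
    have hci : (i:ℝ) ≤ T/δ :=
      le_trans (Nat.cast_le.mpr (Nat.lt_succ_iff.mp (Finset.mem_range.mp hi'))) hfloorT
    have hcj : (j:ℝ) ≤ S/δ :=
      le_trans (Nat.cast_le.mpr (Nat.lt_succ_iff.mp (Finset.mem_range.mp hj'))) hfloorS
    have him : (i:ℝ)*δ ∈ Icc (0:ℝ) T := ⟨by positivity, by nlinarith⟩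
    have hjm : (j:ℝ)*δ ∈ Icc (0:ℝ) S := ⟨by positivity, by nlinarith⟩
    have hle : P (C i j) ≤ ⨆ t : Icc (0:ℝ) T, ⨆ s : Icc (0:ℝ) S,
        P {ω : Ω | ε/3 < |X N ω ↑t ↑s|} :=
      le_iSup_of_le ⟨(i:ℝ)*δ, him⟩ (le_iSup_of_le ⟨(j:ℝ)*δ, hjm⟩ le_rfl)
    exact (lt_of_le_of_lt hle hC).le
  -- putting everything together
  have hcast : ((nt:ℝ≥0∞)) * d ≤ ENNReal.ofReal (T+1) := by
    rw [← ENNReal.ofReal_natCast, hddef, ← ENNReal.ofReal_mul (Nat.cast_nonneg _)]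
    exact ENNReal.ofReal_le_ofReal hntδ
  have hcast' : ((ns:ℝ≥0∞)) * d ≤ ENNReal.ofReal (S+1) := by
    rw [← ENNReal.ofReal_natCast, hddef, ← ENNReal.ofReal_mul (Nat.cast_nonneg _)]
    exact ENNReal.ofReal_le_ofReal hnsδ
  have bound1 : (nt:ℝ≥0∞) * (cT * d) ≤ η/3 := by
    calc (nt:ℝ≥0∞) * (cT * d) = cT * ((nt:ℝ≥0∞) * d) := by ring
      _ ≤ cT * ENNReal.ofReal (T+1) := by gcongr
      _ = η/3 := by
        rw [hcTdef, mul_assoc, ENNReal.inv_mul_cancel hT1 ENNReal.ofReal_ne_top, mul_one]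
  have bound2 : (ns:ℝ≥0∞) * (cS * d) ≤ η/3 := by
    calc (ns:ℝ≥0∞) * (cS * d) = cS * ((ns:ℝ≥0∞) * d) := by ring
      _ ≤ cS * ENNReal.ofReal (S+1) := by gcongr
      _ = η/3 := by
        rw [hcSdef, mul_assoc, ENNReal.inv_mul_cancel hS1 ENNReal.ofReal_ne_top, mul_one]
  have bound3 : (nt:ℝ≥0∞) * ((ns:ℝ≥0∞) * cP) ≤ η/3 := by
    have : (nt:ℝ≥0∞) * ((ns:ℝ≥0∞) * cP) = ((nt*ns : ℕ) : ℝ≥0∞) * cP := by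
      push_cast; ring
    rw [this, hcPdef, ← mul_assoc, mul_comm (((nt*ns : ℕ) : ℝ≥0∞)) (η/3), mul_assoc,
      ENNReal.mul_inv_cancel hK0 (ENNReal.natCast_ne_top _), mul_one]
  calc P {ω : Ω | ∃ t ∈ Icc (0:ℝ) T, ∃ s ∈ Icc (0:ℝ) S, ε < |X N ω t s|}
      ≤ P ((⋃ i ∈ Finset.range nt, A i) ∪
        ((⋃ j ∈ Finset.range ns, B j) ∪
          ⋃ i ∈ Finset.range nt, ⋃ j ∈ Finset.range ns, C i j)) := measure_mono hsub
    _ ≤ P (⋃ i ∈ Finset.range nt, A i) +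
        P ((⋃ j ∈ Finset.range ns, B j) ∪
          ⋃ i ∈ Finset.range nt, ⋃ j ∈ Finset.range ns, C i j) := measure_union_le _ _
    _ ≤ P (⋃ i ∈ Finset.range nt, A i) +
        (P (⋃ j ∈ Finset.range ns, B j) +
          P (⋃ i ∈ Finset.range nt, ⋃ j ∈ Finset.range ns, C i j)) := by
        gcongr
        exact measure_union_le _ _
    _ ≤ (∑ i ∈ Finset.range nt, P (A i)) +
        ((∑ j ∈ Finset.range ns, P (B j)) +
          ∑ i ∈ Finset.range nt, P (⋃ j ∈ Finset.range ns, C i j)) := by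
        gcongr <;> exact measure_biUnion_finset_le _ _
    _ ≤ (∑ _i ∈ Finset.range nt, cT * d) +
        ((∑ _j ∈ Finset.range ns, cS * d) +
          ∑ _i ∈ Finset.range nt, ∑ _j ∈ Finset.range ns, cP) := by
        gcongr with i hi' j hj' i hi'
        · exact hAi _ hi'
        · exact hBj _ hj'
        · exact le_trans (measure_biUnion_finset_le _ _) (Finset.sum_le_sum (hCij _ hi'))
    _ = (nt:ℝ≥0∞) * (cT * d) +
        ((ns:ℝ≥0∞) * (cS * d) + (nt:ℝ≥0∞) * ((ns:ℝ≥0∞) * cP)) := by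
        simp [Finset.sum_const, Finset.card_range, nsmul_eq_mul, mul_assoc]
    _ ≤ η/3 + (η/3 + η/3) := by gcongr
    _ = η := by
        rw [← add_assoc, ENNReal.div_add_div_same, ENNReal.div_add_div_same,
          show η + η + η = 3*η by ring, mul_div_assoc,
          ENNReal.mul_div_cancel' (by norm_num) (by norm_num)]
end

section
/- Let L ≥ 1 be a natural number, Q an L×L real matrix, y₀ ∈ ℝ^L a row vector, γ : ℝ → ℝ continuous, and t ≥ 0. Suppose y : ℝ → ℝ^L satisfies y(0) = y₀ and is differentiable at every s ∈ [0,t] with derivative y'(s) = −γ(s)·(y₀·exp(sQ)) + y(s)·Q. Then y(t) = (1 − ∫₀ᵗ γ(s) ds)·(y₀·exp(tQ)). -/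
/-!
Integrating factor: `z(s) = y(s) e^{-sQ}` satisfies `z' = -γ(s) y₀`, because `e^{-sQ}` commutes
with `Q` and inverts `e^{sQ}`. The fundamental theorem of calculus then gives
`z(t) = (1 - ∫₀ᵗ γ) y₀`, and multiplying by `e^{tQ}` recovers `y(t)`.
-/

open Matrix intervalIntegral NormedSpace

section

variable {𝕜 : Type*} [RCLike 𝕜] {m : Type*} [Fintype m] [DecidableEq m]

theorem Matrix.commute_exp_smul_self (A : Matrix m m 𝕜) (s : 𝕜) : Commute (exp (s • A)) A := by
  open scoped Norms.Operator in
  exact ((Commute.refl A).smul_left s).exp_left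

theorem Matrix.exp_smul_mul_exp_smul_neg (A : Matrix m m 𝕜) (s : 𝕜) :
    exp (s • A) * exp (s • -A) = 1 := by
  rw [← exp_add_of_commute _ _ (((Commute.refl A).neg_right).smul_left s |>.smul_right s),
    smul_neg, add_neg_cancel, exp_zero]

theorem hasDerivAt_vecMul_exp_smul {y : 𝕜 → m → 𝕜} {y' : m → 𝕜} {s : 𝕜}
    (hy : HasDerivAt y y' s) (A : Matrix m m 𝕜) :
    HasDerivAt (fun u => y u ᵥ* exp (u • A))
      (y s ᵥ* (exp (s • A) * A) + y' ᵥ* exp (s • A)) s := by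
  open scoped Norms.Operator in
  exact ContinuousLinearMap.hasDerivAt_of_bilinear
    (B := (LinearMap.toContinuousLinearMap
      (LinearMap.toContinuousLinearMap.toLinearMap ∘ₗ vecMulBilin 𝕜 𝕜) :
        (m → 𝕜) →L[𝕜] Matrix m m 𝕜 →L[𝕜] m → 𝕜))
    (fun _ => hy) (fun _ => hasDerivAt_exp_smul_const A s)

end

theorem vecMul_exp_smul_neg_eq_add_integral {m : Type*} [Fintype m] [DecidableEq m]
    {y f : ℝ → m → ℝ} {Q : Matrix m m ℝ} {t : ℝ} (ht : 0 ≤ t)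
    (hy : ∀ s ∈ Set.Icc 0 t, HasDerivAt y (f s + y s ᵥ* Q) s)
    (hf : IntervalIntegrable (fun s => f s ᵥ* exp (s • -Q)) MeasureTheory.volume 0 t) :
    y t ᵥ* exp (t • -Q) = y 0 + ∫ s in 0..t, f s ᵥ* exp (s • -Q) := by
  have hz : ∀ s ∈ Set.uIcc 0 t,
      HasDerivAt (fun u => y u ᵥ* exp (u • -Q)) (f s ᵥ* exp (s • -Q)) s := by
    intro s hs
    rw [Set.uIcc_of_le ht] at hs
    refine (hasDerivAt_vecMul_exp_smul (hy s hs) (-Q)).congr_deriv ?_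
    rw [(commute_exp_smul_self (-Q) s).eq]
    simp only [add_vecMul, vecMul_vecMul, Matrix.neg_mul, vecMul_neg]
    abel
  rw [integral_eq_sub_of_hasDerivAt hz hf, zero_smul, exp_zero, vecMul_one]
  abel

theorem duhamel_row_vector_ode_general
    (L : ℕ) (Q : Matrix (Fin L) (Fin L) ℝ)
    (y₀ : Fin L → ℝ) (γ : ℝ → ℝ) (hγ : Continuous γ)
    (t : ℝ) (ht : 0 ≤ t)
    (y : ℝ → Fin L → ℝ) (hy0 : y 0 = y₀)
    (hy : ∀ s ∈ Set.Icc (0:ℝ) t,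
      HasDerivAt y (-γ s • (y₀ ᵥ* NormedSpace.exp (s • Q)) + (y s) ᵥ* Q) s) :
    y t = (1 - ∫ s in (0:ℝ)..t, γ s) • (y₀ ᵥ* NormedSpace.exp (t • Q)) := by
  have hforcing : ∀ s, (-γ s • (y₀ ᵥ* exp (s • Q))) ᵥ* exp (s • -Q) = -γ s • y₀ := fun s => by
    rw [smul_vecMul, vecMul_vecMul, exp_smul_mul_exp_smul_neg, vecMul_one]
  have hz := vecMul_exp_smul_neg_eq_add_integral ht hy <| by
    simp_rw [hforcing]
    exact (hγ.neg.smul continuous_const).intervalIntegrable 0 t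
  simp_rw [hforcing, intervalIntegral.integral_smul_const, intervalIntegral.integral_neg,
    hy0] at hz
  have hinv : exp (t • -Q) * exp (t • Q) = 1 := by
    simpa only [neg_neg] using exp_smul_mul_exp_smul_neg (-Q) t
  calc y t = y t ᵥ* exp (t • -Q) ᵥ* exp (t • Q) := by rw [vecMul_vecMul, hinv, vecMul_one]
    _ = (1 - ∫ s in (0:ℝ)..t, γ s) • (y₀ ᵥ* exp (t • Q)) := by
        rw [hz, ← smul_vecMul]
        congr 1
        module

/-- **Duhamel formula** (key step in the proof of (3.5) in Theorem 3.1):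
if `y(0) = y₀` and `y'(s) = -γ(s)·(y₀ · e^{sQ}) + y(s)·Q` on `[0,t]`, then
`y(t) = (1 - ∫₀ᵗ γ(s) ds)·(y₀ · e^{tQ})`. -/
theorem duhamel_row_vector_ode
    (L : ℕ) (hL : 1 ≤ L) (Q : Matrix (Fin L) (Fin L) ℝ)
    (y₀ : Fin L → ℝ) (γ : ℝ → ℝ) (hγ : Continuous γ)
    (t : ℝ) (ht : 0 ≤ t)
    (y : ℝ → Fin L → ℝ) (hy0 : y 0 = y₀)
    (hy : ∀ s ∈ Set.Icc (0:ℝ) t,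
      HasDerivAt y (-γ s • (y₀ ᵥ* NormedSpace.exp (s • Q)) + (y s) ᵥ* Q) s) :
    y t = (1 - ∫ s in (0:ℝ)..t, γ s) • (y₀ ᵥ* NormedSpace.exp (t • Q)) :=
  duhamel_row_vector_ode_general L Q y₀ γ hγ t ht y hy0 hy
end

section
/- Let L ≥ 1 be a natural number and Q an L×L generator matrix. Let Ī₀ : [0,∞) → ℝ^L and Ā : [0,∞) → ℝ^L be continuous, and let Ī⁰, Ī¹ : [0,∞)×[0,∞) → ℝ^L be continuous (all row-vector valued). Suppose Ī : [0,∞)×[0,∞) → ℝ^L is continuous and satisfies, for all t, 𝔞 ≥ 0, Ī(t,𝔞) = Ī₀((𝔞−t)⁺) − Ī⁰(t,𝔞) + Ā(t) − Ā((t−𝔞)⁺) − Ī¹(t,𝔞) + ∫_{(t−𝔞)⁺}^{t} Ī(s, 𝔞−(t−s))·Q ds. Then for all t, 𝔞 ≥ 0, Ī(t,𝔞) = Ī₀((𝔞−t)⁺) − Ī⁰(t,𝔞) + Ā(t) − Ā((t−𝔞)⁺) − Ī¹(t,𝔞) + ∫_{(t−𝔞)⁺}^{t} [ Ī₀((𝔞−t)⁺)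 − Ī⁰(s, 𝔞−t+s) + Ā(s) − Ā((t−𝔞)⁺) − Ī¹(s, 𝔞−t+s) ]·Q·exp((t−s)Q) ds. -/
/-!
Along the characteristic `s ↦ (s, 𝔞 - t + s)`, `b = (t - 𝔞)⁺ ≤ s ≤ t`, the equation for `Ī` becomes
the linear Volterra equation `f s = g s + ∫_b^s f u Q du` with `f s = Ī(s, 𝔞 - t + s)` and `g` the
inhomogeneous terms. Variation of constants solves it: with `F s = ∫_b^s f u Q du`, the product rule
gives `d/ds [F s exp((t - s)Q)] = (f s - F s) Q exp((t - s)Q) = g s Q exp((t - s)Q)`, and integrating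
from `b` to `t` expresses `F t` through `g` alone.
-/

open Matrix intervalIntegral Set

/-- `Q` is the generator matrix of a continuous-time Markov chain on `Fin L`:
nonnegative off-diagonal entries and zero row sums. -/
def IsGeneratorMatrix {L : ℕ} (Q : Matrix (Fin L) (Fin L) ℝ) : Prop :=
  (∀ i j, i ≠ j → 0 ≤ Q i j) ∧ ∀ i, ∑ j, Q i j = 0

theorem hasDerivAt_exp_sub_smul {𝕂 𝔸 : Type*} [RCLike 𝕂] [NormedRing 𝔸] [NormedAlgebra 𝕂 𝔸]
    [CompleteSpace 𝔸] (x : 𝔸) (t s : 𝕂) :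
    HasDerivAt (fun u : 𝕂 => NormedSpace.exp ((t - u) • x))
      (-(x * NormedSpace.exp ((t - s) • x))) s := by
  simpa [Function.comp_def] using
    (hasDerivAt_exp_smul_const' x (t - s)).scomp s ((hasDerivAt_id s).const_sub t)

section

attribute [local instance] Matrix.linftyOpNormedAddCommGroup Matrix.linftyOpNormedSpace
  Matrix.linftyOpNormedRing Matrix.linftyOpNormedAlgebra

theorem HasDerivAt.vecMul {𝕜 m n : Type*} [NontriviallyNormedField 𝕜] [CompleteSpace 𝕜]
    [Fintype m] [Fintype n]
    {v : 𝕜 → m → 𝕜} {M : 𝕜 → Matrix m n 𝕜} {v' : m → 𝕜} {M' : Matrix m n 𝕜} {x : 𝕜}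
    (hv : HasDerivAt v v' x) (hM : HasDerivAt M M' x) :
    HasDerivAt (fun s => v s ᵥ* M s) (v x ᵥ* M' + v' ᵥ* M x) x :=
  (vecMulBilin 𝕜 𝕜 : (m → 𝕜) →ₗ[𝕜] Matrix m n 𝕜 →ₗ[𝕜] (n → 𝕜)).toContinuousBilinearMap
    |>.hasDerivAt_of_bilinear (fun _ => hv) (fun _ => hM)

theorem integral_vecMul_eq_of_volterra {n : Type*} [Fintype n] [DecidableEq n]
    (Q : Matrix n n ℝ) {b t : ℝ} (hbt : b ≤ t) {f g : ℝ → n → ℝ}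
    (hf : ContinuousOn f (Icc b t)) (hg : ContinuousOn g (Icc b t))
    (heq : ∀ s ∈ Icc b t, f s = g s + ∫ u in b..s, f u ᵥ* Q) :
    ∫ u in b..t, f u ᵥ* Q = ∫ u in b..t, (g u ᵥ* Q) ᵥ* NormedSpace.exp ((t - u) • Q) := by
  set F : ℝ → n → ℝ := fun s => ∫ u in b..s, f u ᵥ* Q
  set E : ℝ → Matrix n n ℝ := fun s => NormedSpace.exp ((t - s) • Q)
  have hfQ : ContinuousOn (fun u => f u ᵥ* Q) (Icc b t) := by fun_prop
  have hF : ContinuousOn F (Icc b t) := by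
    simpa [uIcc_of_le hbt] using
      continuousOn_primitive_interval (hfQ.integrableOn_Icc.mono_set (uIcc_of_le hbt).subset)
  have hE : Continuous E := by fun_prop
  have hderiv : ∀ s ∈ Ioo b t,
      HasDerivAt (fun s => F s ᵥ* E s) ((g s ᵥ* Q) ᵥ* E s) s := by
    intro s hs
    have hFs : HasDerivAt F (f s ᵥ* Q) s :=
      integral_hasDerivAt_right
        ((hfQ.mono (Icc_subset_Icc_right hs.2.le)).intervalIntegrable_of_Icc hs.1.le)
        ((hfQ.mono Ioo_subset_Icc_self).stronglyMeasurableAtFilter isOpen_Ioo s hs)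
        (hfQ.continuousAt (Icc_mem_nhds hs.1 hs.2))
    refine (hFs.vecMul (hasDerivAt_exp_sub_smul Q t s)).congr_deriv ?_
    rw [heq s (Ioo_subset_Icc_self hs)]
    simp only [add_vecMul, vecMul_neg, vecMul_vecMul]
    abel
  have hint : IntervalIntegrable (fun s => (g s ᵥ* Q) ᵥ* E s) MeasureTheory.volume b t :=
    ContinuousOn.intervalIntegrable_of_Icc hbt (by fun_prop)
  have := integral_eq_sub_of_hasDerivAt_of_le hbt (by fun_prop) hderiv hint
  simpa [F, E] using this.symm

end

theorem limit_mfI_explicit_formula_general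
    (L : ℕ) (Q : Matrix (Fin L) (Fin L) ℝ)
    (I₀ A : ℝ → Fin L → ℝ)
    (hA : ContinuousOn A (Ici 0))
    (I0 I1 : ℝ → ℝ → Fin L → ℝ)
    (hI0 : ContinuousOn (fun p : ℝ × ℝ => I0 p.1 p.2) (Ici 0 ×ˢ Ici 0))
    (hI1 : ContinuousOn (fun p : ℝ × ℝ => I1 p.1 p.2) (Ici 0 ×ˢ Ici 0))
    (I : ℝ → ℝ → Fin L → ℝ)
    (hI : ContinuousOn (fun p : ℝ × ℝ => I p.1 p.2) (Ici 0 ×ˢ Ici 0))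
    (heq : ∀ t ≥ (0:ℝ), ∀ 𝔞 ≥ (0:ℝ),
      I t 𝔞 = I₀ (max (𝔞 - t) 0) - I0 t 𝔞 + A t - A (max (t - 𝔞) 0) - I1 t 𝔞
        + ∫ s in (max (t - 𝔞) 0)..t, (I s (𝔞 - (t - s))) ᵥ* Q) :
    ∀ t ≥ (0:ℝ), ∀ 𝔞 ≥ (0:ℝ),
      I t 𝔞 = I₀ (max (𝔞 - t) 0) - I0 t 𝔞 + A t - A (max (t - 𝔞) 0) - I1 t 𝔞
        + ∫ s in (max (t - 𝔞) 0)..t,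
            ((I₀ (max (𝔞 - t) 0) - I0 s (𝔞 - t + s) + A s - A (max (t - 𝔞) 0)
                - I1 s (𝔞 - t + s)) ᵥ* Q) ᵥ* NormedSpace.exp ((t - s) • Q) := by
  intro t ht 𝔞 h𝔞
  set b := max (t - 𝔞) 0
  have hb : 0 ≤ b := le_max_right _ _
  have hbt : b ≤ t := max_le (by linarith) ht
  have hb𝔞 : t - 𝔞 ≤ b := le_max_left _ _
  have hchar : MapsTo (fun s => (s, 𝔞 - t + s)) (Icc b t) (Ici 0 ×ˢ Ici 0) :=
    fun s hs => ⟨hb.trans hs.1, show 0 ≤ 𝔞 - t + s by linarith [hs.1]⟩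
  have hcont {J : ℝ → ℝ → Fin L → ℝ}
      (hJ : ContinuousOn (fun p : ℝ × ℝ => J p.1 p.2) (Ici 0 ×ˢ Ici 0)) :
      ContinuousOn (fun s => J s (𝔞 - t + s)) (Icc b t) :=
    hJ.comp (by fun_prop) hchar
  have hAb : ContinuousOn A (Icc b t) := hA.mono fun s hs => hb.trans hs.1
  have hvolterra : ∀ s ∈ Icc b t, I s (𝔞 - t + s) = I₀ (max (𝔞 - t) 0) - I0 s (𝔞 - t + s)
      + A s - A b - I1 s (𝔞 - t + s) + ∫ u in b..s, I u (𝔞 - t + u) ᵥ* Q := by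
    intro s hs
    have := heq s (hb.trans hs.1) (𝔞 - t + s) (hchar hs).2
    simpa [show s - (𝔞 - t + s) = t - 𝔞 by ring, show ∀ u, 𝔞 - t + s - (s - u) = 𝔞 - t + u
      from fun u => by ring] using this
  rw [heq t ht 𝔞 h𝔞, ← integral_vecMul_eq_of_volterra Q hbt (hcont hI) (by fun_prop) hvolterra]
  simp only [show ∀ s, 𝔞 - (t - s) = 𝔞 - t + s from fun s => by ring]
  rfl

/-- **Lemma 4.7.** Explicit formula for the FLLN limit `Ī(t,𝔞)` in terms of the
inhomogeneous terms of the Volterra equation it satisfies. -/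
theorem limit_mfI_explicit_formula
    (L : ℕ) (hL : 1 ≤ L) (Q : Matrix (Fin L) (Fin L) ℝ) (hQ : IsGeneratorMatrix Q)
    (I₀ A : ℝ → Fin L → ℝ)
    (hI₀ : ContinuousOn I₀ (Ici 0)) (hA : ContinuousOn A (Ici 0))
    (I0 I1 : ℝ → ℝ → Fin L → ℝ)
    (hI0 : ContinuousOn (fun p : ℝ × ℝ => I0 p.1 p.2) (Ici 0 ×ˢ Ici 0))
    (hI1 : ContinuousOn (fun p : ℝ × ℝ => I1 p.1 p.2) (Ici 0 ×ˢ Ici 0))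
    (I : ℝ → ℝ → Fin L → ℝ)
    (hI : ContinuousOn (fun p : ℝ × ℝ => I p.1 p.2) (Ici 0 ×ˢ Ici 0))
    (heq : ∀ t ≥ (0:ℝ), ∀ 𝔞 ≥ (0:ℝ),
      I t 𝔞 = I₀ (max (𝔞 - t) 0) - I0 t 𝔞 + A t - A (max (t - 𝔞) 0) - I1 t 𝔞
        + ∫ s in (max (t - 𝔞) 0)..t, (I s (𝔞 - (t - s))) ᵥ* Q) :
    ∀ t ≥ (0:ℝ), ∀ 𝔞 ≥ (0:ℝ),
      I t 𝔞 = I₀ (max (𝔞 - t) 0) - I0 t 𝔞 + A t - A (max (t - 𝔞) 0) - I1 t 𝔞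
        + ∫ s in (max (t - 𝔞) 0)..t,
            ((I₀ (max (𝔞 - t) 0) - I0 s (𝔞 - t + s) + A s - A (max (t - 𝔞) 0)
                - I1 s (𝔞 - t + s)) ᵥ* Q) ᵥ* NormedSpace.exp ((t - s) • Q) :=
  limit_mfI_explicit_formula_general L Q I₀ A hA I0 I1 hI0 hI1 I hI heq
end

section
/- Let L ≥ 1 be a natural number, Q an L×L generator matrix, and F a cumulative distribution function on [0,∞) with F(0)=0 admitting a continuous density f ≥ 0, F^c := 1−F with F^c(x) > 0 for all x ≥ 0, and hazard rate μ(a) := f(a)/F^c(a). Let i₀ : [0,∞) → ℝ^L and b : [0,∞) → ℝ^L be continuous row-vector-valued functions, and define i : [0,∞)×[0,∞) → ℝ^L by i(t,𝔞) = (F^c(𝔞)/F^c(𝔞−t))·i₀(𝔞−t)·exp(tQ) if 0 ≤ t ≤ 𝔞, and i(t,𝔞) = F^c(𝔞)·b(t−𝔞)·exp(𝔞Q) if 0 ≤ 𝔞 < t. Then for every (t,𝔞) with t > 0, 𝔞 > 0 and t ≠ 𝔞, the directional derivative of i at (t,𝔞) in the direction (1,1) exists and equals −μ(𝔞)·i(t,𝔞)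 + i(t,𝔞)·Q. -/
open Matrix intervalIntegral Set

/-- The complementary c.d.f. `F^c = 1 - F` associated with the density `f` on `[0,∞)`,
where `F(x) = ∫₀ˣ f(u) du`. -/
noncomputable def survival (f : ℝ → ℝ) (x : ℝ) : ℝ := 1 - ∫ u in (0:ℝ)..x, f u

/-!
Along a characteristic `h ↦ (t + h, 𝔞 + h)` the age-shifted argument `𝔞 - t` of `i₀`, resp.
the birth time `t - 𝔞` of `b`, is constant, so on either side of the diagonal `i` is the
product of a scalar solution of `φ' = -μ(𝔞) φ`, namely a multiple of `h ↦ F^c(𝔞 + h)`, and a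
row-vector solution of `w' = w Q`, namely `h ↦ v exp((s + h) Q)`; the product rule gives the
PDE.
-/

attribute [local instance] Matrix.linftyOpNormedRing Matrix.linftyOpNormedAlgebra

variable {n : Type*} [Fintype n]

noncomputable def vecMulCLM (v : n → ℝ) : Matrix n n ℝ →L[ℝ] (n → ℝ) :=
  LinearMap.toContinuousLinearMap
    { toFun := fun M => v ᵥ* M
      map_add' := fun M N => vecMul_add M N v
      map_smul' := fun c M => vecMul_smul v c M }

variable [DecidableEq n]

theorem hasDerivAt_vecMul_exp_smul_s7 (Q : Matrix n n ℝ) (v : n → ℝ) (s : ℝ) :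
    HasDerivAt (fun u : ℝ => v ᵥ* NormedSpace.exp (u • Q))
      ((v ᵥ* NormedSpace.exp (s • Q)) ᵥ* Q) s := by
  rw [vecMul_vecMul]
  exact (vecMulCLM v).hasFDerivAt.comp_hasDerivAt s (hasDerivAt_exp_smul_const Q s)

theorem hasDerivAt_smul_vecMul_exp {φ : ℝ → ℝ} {μ : ℝ} (hφ : HasDerivAt φ (-μ * φ 0) 0)
    (Q : Matrix n n ℝ) (v : n → ℝ) (s : ℝ) :
    HasDerivAt (fun h : ℝ => φ h • (v ᵥ* NormedSpace.exp ((s + h) • Q)))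
      (-μ • (φ 0 • (v ᵥ* NormedSpace.exp (s • Q)))
        + (φ 0 • (v ᵥ* NormedSpace.exp (s • Q))) ᵥ* Q) 0 := by
  have hexp := (hasDerivAt_vecMul_exp_smul_s7 Q v (s + 0)).comp_const_add s 0
  refine (hφ.smul hexp).congr_deriv ?_
  rw [add_zero, smul_vecMul, smul_smul, add_comm]

theorem hasDerivAt_survival {f : ℝ → ℝ} (hf : Continuous f) (x : ℝ) :
    HasDerivAt (survival f) (-f x) x :=
  (integral_hasDerivAt_right (hf.intervalIntegrable 0 x)
    (hf.stronglyMeasurableAtFilter _ _) hf.continuousAt).const_sub 1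

theorem hasDerivAt_survival_add_div {f : ℝ → ℝ} (hf : Continuous f) {𝔞 : ℝ}
    (h𝔞 : survival f 𝔞 ≠ 0) (c : ℝ) :
    HasDerivAt (fun h : ℝ => survival f (𝔞 + h) / c)
      (-(f 𝔞 / survival f 𝔞) * (survival f 𝔞 / c)) 0 := by
  have hS := ((hasDerivAt_survival hf (𝔞 + 0)).comp_const_add 𝔞 0).div_const c
  rw [add_zero] at hS
  refine hS.congr_deriv ?_
  field_simp

theorem transport_pde_existence_general
    (L : ℕ) (Q : Matrix (Fin L) (Fin L) ℝ)
    (f : ℝ → ℝ) (hf_cont : Continuous f)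
    (hFc_pos : ∀ x ≥ (0:ℝ), 0 < survival f x)
    (i₀ b : ℝ → Fin L → ℝ)
    (i : ℝ → ℝ → Fin L → ℝ)
    (hi_le : ∀ t 𝔞 : ℝ, 0 ≤ t → t ≤ 𝔞 →
      i t 𝔞 = (survival f 𝔞 / survival f (𝔞 - t)) •
        ((i₀ (𝔞 - t)) ᵥ* NormedSpace.exp (t • Q)))
    (hi_gt : ∀ t 𝔞 : ℝ, 0 ≤ 𝔞 → 𝔞 < t →
      i t 𝔞 = survival f 𝔞 • ((b (t - 𝔞)) ᵥ* NormedSpace.exp (𝔞 • Q))) :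
    ∀ t > (0:ℝ), ∀ 𝔞 > (0:ℝ), t ≠ 𝔞 →
      HasDerivAt (fun h : ℝ => i (t + h) (𝔞 + h))
        (-(f 𝔞 / survival f 𝔞) • i t 𝔞 + (i t 𝔞) ᵥ* Q) 0 := by
  intro t ht 𝔞 h𝔞 hne
  have hS := hasDerivAt_survival_add_div hf_cont (hFc_pos 𝔞 h𝔞.le).ne'
  rcases hne.lt_or_gt with hlt | hgt
  · have key := hasDerivAt_smul_vecMul_exp
      (φ := fun h ↦ survival f (𝔞 + h) / survival f (𝔞 - t)) (by simpa using hS _)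
      Q (i₀ (𝔞 - t)) t
    simp only [add_zero, ← hi_le t 𝔞 ht.le hlt.le] at key
    refine key.congr_of_eventuallyEq ?_
    filter_upwards [eventually_gt_nhds (neg_lt_zero.2 ht)] with h hh
    rw [hi_le (t + h) (𝔞 + h) (by linarith) (by linarith), add_sub_add_right_eq_sub]
  · have key := hasDerivAt_smul_vecMul_exp
      (φ := fun h ↦ survival f (𝔞 + h)) (by simpa using hS 1) Q (b (t - 𝔞)) 𝔞
    simp only [add_zero, ← hi_gt t 𝔞 h𝔞.le hgt] at key
    refine key.congr_of_eventuallyEq ?_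
    filter_upwards [eventually_gt_nhds (neg_lt_zero.2 h𝔞)] with h hh
    rw [hi_gt (t + h) (𝔞 + h) (by linarith) (by linarith), add_sub_add_right_eq_sub]

/-- **Theorem 3.1, existence part.** The function defined by formulas (3.4)–(3.5) solves
the transport PDE `∂_t i + ∂_𝔞 i = -μ(𝔞) i + i Q` away from the diagonal `t = 𝔞`. -/
theorem transport_pde_existence
    (L : ℕ) (hL : 1 ≤ L) (Q : Matrix (Fin L) (Fin L) ℝ) (hQ : IsGeneratorMatrix Q)
    (f : ℝ → ℝ) (hf_cont : Continuous f) (hf_nonneg : ∀ x, 0 ≤ f x)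
    (hf_prob : ∫ u in Ioi (0:ℝ), f u = 1)
    (hFc_pos : ∀ x ≥ (0:ℝ), 0 < survival f x)
    (i₀ b : ℝ → Fin L → ℝ)
    (hi₀ : ContinuousOn i₀ (Ici 0)) (hb : ContinuousOn b (Ici 0))
    (i : ℝ → ℝ → Fin L → ℝ)
    (hi_le : ∀ t 𝔞 : ℝ, 0 ≤ t → t ≤ 𝔞 →
      i t 𝔞 = (survival f 𝔞 / survival f (𝔞 - t)) •
        ((i₀ (𝔞 - t)) ᵥ* NormedSpace.exp (t • Q)))
    (hi_gt : ∀ t 𝔞 : ℝ, 0 ≤ 𝔞 → 𝔞 < t →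
      i t 𝔞 = survival f 𝔞 • ((b (t - 𝔞)) ᵥ* NormedSpace.exp (𝔞 • Q))) :
    ∀ t > (0:ℝ), ∀ 𝔞 > (0:ℝ), t ≠ 𝔞 →
      HasDerivAt (fun h : ℝ => i (t + h) (𝔞 + h))
        (-(f 𝔞 / survival f 𝔞) • i t 𝔞 + (i t 𝔞) ᵥ* Q) 0 :=
  transport_pde_existence_general L Q f hf_cont hFc_pos i₀ b i hi_le hi_gt
end

section
/- Let L ≥ 1 be a natural number, let ν^S, ν^I, ν^R be L×L matrices with nonnegative entries, let Q be the generator matrix with off-diagonal entries ν^I_{ℓℓ'} and p_{ℓℓ'}(t) := (exp(tQ))_{ℓℓ'}, let f : [0,∞) → [0,∞) be a continuous probability density with F(x) := ∫₀ˣ f(u)du and F^c := 1−F > 0 on [0,∞), and let ī₀ : [0,∞) → [0,∞)^L be continuous and integrable with Ī_ℓ(0) := ∫₀^∞ ī₀,ℓ(𝔞)d𝔞. Suppose (v, S̄, Ī, R̄) : [0,∞) → ℝ^{4L} is continuous with all components nonnegative and satisfies, for all t ≥ 0 and all ℓ: S̄_ℓ(t) = S̄_ℓ(0) − ∫₀ᵗ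 v_ℓ(s)ds + ∑_{ℓ'} ∫₀ᵗ (ν^S_{ℓ'ℓ} S̄_{ℓ'}(s) − ν^S_{ℓℓ'} S̄_ℓ(s))ds; Ī_ℓ(t) = Ī_ℓ(0) − ∑_{ℓ'} ∫₀^∞ (∫₀ᵗ p_{ℓ'ℓ}(u)·(f(u+𝔞)/F^c(𝔞))du)·ī₀,ℓ'(𝔞)d𝔞 + ∫₀ᵗ v_ℓ(s)ds − ∑_{ℓ'} ∫₀ᵗ (∫₀^{t−s} p_{ℓ'ℓ}(u)f(u)du)·v_{ℓ'}(s)ds + ∑_{ℓ'} ∫₀ᵗ (ν^I_{ℓ'ℓ} Ī_{ℓ'}(s) − ν^I_{ℓℓ'} Ī_ℓ(s))ds; R̄_ℓ(t) = R̄_ℓ(0) + ∑_{ℓ'} ∫₀^∞ (∫₀ᵗ p_{ℓ'ℓ}(u)·(f(u+𝔞)/F^c(𝔞))du)·ī₀,ℓ'(𝔞)d𝔞 + ∑_{ℓ'} ∫₀ᵗ (∫₀^{t−s} p_{ℓ'ℓ}(u)f(u)du)·v_{ℓ'}(s)ds + ∑_{ℓ'} ∫₀ᵗ (ν^R_{ℓ'ℓ}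 R̄_{ℓ'}(s) − ν^R_{ℓℓ'} R̄_ℓ(s))ds. Set B̄_ℓ := S̄_ℓ + Ī_ℓ + R̄_ℓ and c := max_ℓ ∑_{ℓ'≠ℓ} max(ν^S_{ℓℓ'}, ν^I_{ℓℓ'}, ν^R_{ℓℓ'}). Then B̄_ℓ(t) ≥ B̄_ℓ(0)·e^{−ct} for all t ≥ 0 and all ℓ. In particular, if B̄_ℓ(0) > 0 for every ℓ, then for each T > 0 there exists c_T > 0 such that B̄_ℓ(t) ≥ c_T for all t ∈ [0,T] and all ℓ. -/
open Matrix intervalIntegral Set MeasureTheory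

/-!
Adding the equations for `S̄_ℓ`, `Ī_ℓ` and `R̄_ℓ`, the infection terms `∫ v` and the recovery
terms cancel, so `B̄_ℓ(t) = B̄_ℓ(0) + ∫₀ᵗ g_ℓ`, where `g_ℓ` is the net migration into patch `ℓ`
of the three compartments. Immigration is nonnegative and emigration is at most `c · B̄_ℓ`, so
`B̄_ℓ' ≥ -c B̄_ℓ`, and Grönwall's inequality gives `B̄_ℓ(t) ≥ B̄_ℓ(0) e^{-ct}`.
-/

open Filter Topology

theorem mul_exp_neg_le_of_hasDerivWithinAt {B g : ℝ → ℝ} {c : ℝ}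
    (hB : ∀ x ≥ 0, HasDerivWithinAt B (g x) (Ici 0) x) (hgB : ∀ x ≥ 0, -(c * B x) ≤ g x)
    {t : ℝ} (ht : 0 ≤ t) : B 0 * Real.exp (-c * t) ≤ B t := by
  -- Grönwall's upper bound, applied to `-B`, which satisfies `(-B)' ≤ -c · (-B)`.
  have hcont : ContinuousOn (fun x => -B x) (Icc 0 t) := fun x hx =>
    ((hB x hx.1).continuousWithinAt.mono Icc_subset_Ici_self).neg
  have h := le_gronwallBound_of_liminf_deriv_right_le (f' := fun x => -g x) (δ := -B 0)
    (K := -c) (ε := 0) hcont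
    (fun x hx _ hr => ((hB x hx.1).mono (Ici_subset_Ici.2 hx.1)).neg.liminf_right_slope_le hr)
    le_rfl (fun x hx => by linarith [hgB x hx.1]) t ⟨ht, le_rfl⟩
  rw [gronwallBound_ε0, sub_zero] at h
  linarith

theorem hasDerivWithinAt_of_eq_add_integral {B g : ℝ → ℝ} (hg : ContinuousOn g (Ici 0))
    (hB : ∀ t ≥ 0, B t = B 0 + ∫ s in (0:ℝ)..t, g s) {x : ℝ} (hx : 0 ≤ x) :
    HasDerivWithinAt B (g x) (Ici 0) x := by
  have hg' : Continuous fun s => g (max s 0) :=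
    hg.comp_continuous (continuous_id.max continuous_const) fun s => le_max_right s 0
  have hφ : HasDerivAt (fun t => B 0 + ∫ s in (0:ℝ)..t, g (max s 0)) (g x) x := by
    simpa only [max_eq_left hx] using (integral_hasDerivAt_right (hg'.intervalIntegrable 0 x)
      hg'.aestronglyMeasurable.stronglyMeasurableAtFilter hg'.continuousAt).const_add (B 0)
  have hEq : EqOn B (fun t => B 0 + ∫ s in (0:ℝ)..t, g (max s 0)) (Ici 0) := fun t ht => by
    rw [hB t ht]
    congr 1
    refine integral_congr fun s hs => ?_
    rw [uIcc_of_le ht] at hs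
    rw [max_eq_left hs.1]
  exact hφ.hasDerivWithinAt.congr hEq (hEq hx)

section NetInflow

variable {ι : Type*} [Fintype ι]

def netInflow (ν : Matrix ι ι ℝ) (x : ι → ℝ) (ℓ : ι) : ℝ := ∑ ℓ', (ν ℓ' ℓ * x ℓ' - ν ℓ ℓ' * x ℓ)

theorem continuousOn_netInflow {ν : Matrix ι ι ℝ} {X : ℝ → ι → ℝ} {s : Set ℝ}
    (hX : ContinuousOn X s) (ℓ : ι) : ContinuousOn (fun t => netInflow ν (X t) ℓ) s := by
  unfold netInflow
  fun_prop

theorem integral_netInflow {ν : Matrix ι ι ℝ} {X : ℝ → ι → ℝ} {a b : ℝ}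
    (hX : ContinuousOn X (uIcc a b)) (ℓ : ι) :
    ∫ s in a..b, netInflow ν (X s) ℓ = ∑ ℓ', ∫ s in a..b, (ν ℓ' ℓ * X s ℓ' - ν ℓ ℓ' * X s ℓ) :=
  integral_finsetSum fun ℓ' _ => ContinuousOn.intervalIntegrable (by fun_prop)

theorem integral_netInflow_add {νS νI νR : Matrix ι ι ℝ} {X Y Z : ℝ → ι → ℝ} {a b : ℝ}
    (hX : ContinuousOn X (uIcc a b)) (hY : ContinuousOn Y (uIcc a b))
    (hZ : ContinuousOn Z (uIcc a b)) (ℓ : ι) :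
    ∫ s in a..b, (netInflow νS (X s) ℓ + netInflow νI (Y s) ℓ + netInflow νR (Z s) ℓ) =
      (∑ ℓ', ∫ s in a..b, (νS ℓ' ℓ * X s ℓ' - νS ℓ ℓ' * X s ℓ))
        + (∑ ℓ', ∫ s in a..b, (νI ℓ' ℓ * Y s ℓ' - νI ℓ ℓ' * Y s ℓ))
        + ∑ ℓ', ∫ s in a..b, (νR ℓ' ℓ * Z s ℓ' - νR ℓ ℓ' * Z s ℓ) := by
  have hint : ∀ (ν : Matrix ι ι ℝ) {W : ℝ → ι → ℝ}, ContinuousOn W (uIcc a b) →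
      IntervalIntegrable (fun s => netInflow ν (W s) ℓ) volume a b := fun _ _ hW =>
    (continuousOn_netInflow hW ℓ).intervalIntegrable
  rw [integral_add ((hint νS hX).add (hint νI hY)) (hint νR hZ),
    integral_add (hint νS hX) (hint νI hY), integral_netInflow hX, integral_netInflow hY,
    integral_netInflow hZ]

variable [DecidableEq ι]

theorem neg_mul_le_netInflow {ν : Matrix ι ι ℝ} (hν : ∀ i j, 0 ≤ ν i j) {x : ι → ℝ}
    (hx : ∀ i, 0 ≤ x i) (ℓ : ι) :
    -((∑ ℓ' ∈ Finset.univ.erase ℓ, ν ℓ ℓ') * x ℓ) ≤ netInflow ν x ℓ := by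
  rw [netInflow, ← Finset.sum_erase_add _ _ (Finset.mem_univ ℓ), sub_self, add_zero,
    Finset.sum_mul, ← Finset.sum_neg_distrib]
  exact Finset.sum_le_sum fun ℓ' _ => by linarith [mul_nonneg (hν ℓ' ℓ) (hx ℓ')]

theorem neg_mul_le_netInflow_add {νS νI νR : Matrix ι ι ℝ} (hνS : ∀ i j, 0 ≤ νS i j)
    (hνI : ∀ i j, 0 ≤ νI i j) (hνR : ∀ i j, 0 ≤ νR i j) {x y z : ι → ℝ} (hx : ∀ i, 0 ≤ x i)
    (hy : ∀ i, 0 ≤ y i) (hz : ∀ i, 0 ≤ z i) {ℓ : ι} {m : ℝ}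
    (hm : ∑ j ∈ Finset.univ.erase ℓ, max (νS ℓ j) (max (νI ℓ j) (νR ℓ j)) ≤ m) :
    -(m * (x ℓ + y ℓ + z ℓ)) ≤ netInflow νS x ℓ + netInflow νI y ℓ + netInflow νR z ℓ := by
  have hmS : ∑ j ∈ Finset.univ.erase ℓ, νS ℓ j ≤ m :=
    (Finset.sum_le_sum fun j _ => le_max_left _ _).trans hm
  have hmI : ∑ j ∈ Finset.univ.erase ℓ, νI ℓ j ≤ m :=
    (Finset.sum_le_sum fun j _ => (le_max_left _ _).trans (le_max_right _ _)).trans hm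
  have hmR : ∑ j ∈ Finset.univ.erase ℓ, νR ℓ j ≤ m :=
    (Finset.sum_le_sum fun j _ => (le_max_right _ _).trans (le_max_right _ _)).trans hm
  linarith [neg_mul_le_netInflow hνS hx ℓ, neg_mul_le_netInflow hνI hy ℓ,
    neg_mul_le_netInflow hνR hz ℓ, mul_le_mul_of_nonneg_right hmS (hx ℓ),
    mul_le_mul_of_nonneg_right hmI (hy ℓ), mul_le_mul_of_nonneg_right hmR (hz ℓ)]

end NetInflow

theorem exists_pos_forall_le_of_forall_pos {ι : Type*} [Finite ι] {b : ι → ℝ}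
    (hb : ∀ i, 0 < b i) : ∃ m > 0, ∀ i, m ≤ b i :=
  ((eventually_mem_nhdsWithin (s := Ioi 0) (a := 0)).and (eventually_all.2 fun i =>
    eventually_nhdsWithin_of_eventually_nhds (eventually_le_nhds (hb i)))).exists

theorem multiPatch_total_mass_lower_bound_general
    (L : ℕ)
    (νS νI νR : Matrix (Fin L) (Fin L) ℝ)
    (hνS : ∀ ℓ ℓ', 0 ≤ νS ℓ ℓ') (hνI : ∀ ℓ ℓ', 0 ≤ νI ℓ ℓ')
    (hνR : ∀ ℓ ℓ', 0 ≤ νR ℓ ℓ')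
    (Q : Matrix (Fin L) (Fin L) ℝ)
    (f : ℝ → ℝ)
    (i₀ : ℝ → Fin L → ℝ)
    (v S I R : ℝ → Fin L → ℝ)
    (hS_cont : ContinuousOn S (Ici 0))
    (hI_cont : ContinuousOn I (Ici 0)) (hR_cont : ContinuousOn R (Ici 0))
    (hnonneg : ∀ t ≥ (0:ℝ), ∀ ℓ, 0 ≤ v t ℓ ∧ 0 ≤ S t ℓ ∧ 0 ≤ I t ℓ ∧ 0 ≤ R t ℓ)
    (heqS : ∀ t ≥ (0:ℝ), ∀ ℓ,
      S t ℓ = S 0 ℓ - (∫ s in (0:ℝ)..t, v s ℓ)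
        + ∑ ℓ', ∫ s in (0:ℝ)..t, (νS ℓ' ℓ * S s ℓ' - νS ℓ ℓ' * S s ℓ))
    (heqI : ∀ t ≥ (0:ℝ), ∀ ℓ,
      I t ℓ = (∫ 𝔞 in Ioi (0:ℝ), i₀ 𝔞 ℓ)
        - (∑ ℓ', ∫ 𝔞 in Ioi (0:ℝ),
            (∫ u in (0:ℝ)..t,
              NormedSpace.exp (u • Q) ℓ' ℓ * (f (u + 𝔞) / survival f 𝔞)) * i₀ 𝔞 ℓ')
        + (∫ s in (0:ℝ)..t, v s ℓ)
        - (∑ ℓ', ∫ s in (0:ℝ)..t,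
            (∫ u in (0:ℝ)..(t - s), NormedSpace.exp (u • Q) ℓ' ℓ * f u) * v s ℓ')
        + ∑ ℓ', ∫ s in (0:ℝ)..t, (νI ℓ' ℓ * I s ℓ' - νI ℓ ℓ' * I s ℓ))
    (heqR : ∀ t ≥ (0:ℝ), ∀ ℓ,
      R t ℓ = R 0 ℓ
        + (∑ ℓ', ∫ 𝔞 in Ioi (0:ℝ),
            (∫ u in (0:ℝ)..t,
              NormedSpace.exp (u • Q) ℓ' ℓ * (f (u + 𝔞) / survival f 𝔞)) * i₀ 𝔞 ℓ')
        + (∑ ℓ', ∫ s in (0:ℝ)..t,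
            (∫ u in (0:ℝ)..(t - s), NormedSpace.exp (u • Q) ℓ' ℓ * f u) * v s ℓ')
        + ∑ ℓ', ∫ s in (0:ℝ)..t, (νR ℓ' ℓ * R s ℓ' - νR ℓ ℓ' * R s ℓ))
    (hI0 : ∀ ℓ, I 0 ℓ = ∫ 𝔞 in Ioi (0:ℝ), i₀ 𝔞 ℓ) :
    (∀ t ≥ (0:ℝ), ∀ ℓ,
      (S 0 ℓ + I 0 ℓ + R 0 ℓ) *
          Real.exp (-(⨆ ℓ'' : Fin L, ∑ ℓ' ∈ Finset.univ.erase ℓ'',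
            max (νS ℓ'' ℓ') (max (νI ℓ'' ℓ') (νR ℓ'' ℓ'))) * t)
        ≤ S t ℓ + I t ℓ + R t ℓ) ∧
    ((∀ ℓ, 0 < S 0 ℓ + I 0 ℓ + R 0 ℓ) →
      ∀ T > (0:ℝ), ∃ cT > (0:ℝ), ∀ t ∈ Icc (0:ℝ) T, ∀ ℓ,
        cT ≤ S t ℓ + I t ℓ + R t ℓ) := by
  set c := ⨆ ℓ'' : Fin L, ∑ ℓ' ∈ Finset.univ.erase ℓ'',
    max (νS ℓ'' ℓ') (max (νI ℓ'' ℓ') (νR ℓ'' ℓ'))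
  have hrow : ∀ ℓ, ∑ ℓ' ∈ Finset.univ.erase ℓ, max (νS ℓ ℓ') (max (νI ℓ ℓ') (νR ℓ ℓ')) ≤ c :=
    le_ciSup (Finite.bddAbove_range _)
  have hc : 0 ≤ c := Real.iSup_nonneg fun _ =>
    Finset.sum_nonneg fun _ _ => (hνS _ _).trans (le_max_left _ _)
  have hflow_cont : ∀ ℓ, ContinuousOn (fun s => netInflow νS (S s) ℓ + netInflow νI (I s) ℓ
      + netInflow νR (R s) ℓ) (Ici 0) := fun ℓ =>
    ((continuousOn_netInflow hS_cont ℓ).add (continuousOn_netInflow hI_cont ℓ)).add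
      (continuousOn_netInflow hR_cont ℓ)
  have hmass : ∀ ℓ, ∀ t ≥ 0, S t ℓ + I t ℓ + R t ℓ = (S 0 ℓ + I 0 ℓ + R 0 ℓ)
      + ∫ s in (0:ℝ)..t, (netInflow νS (S s) ℓ + netInflow νI (I s) ℓ + netInflow νR (R s) ℓ) := by
    intro ℓ t ht
    have hsub : uIcc 0 t ⊆ Ici 0 := by rw [uIcc_of_le ht]; exact Icc_subset_Ici_self
    rw [integral_netInflow_add (hS_cont.mono hsub) (hI_cont.mono hsub) (hR_cont.mono hsub)]
    linarith [heqS t ht ℓ, heqI t ht ℓ, heqR t ht ℓ, hI0 ℓ]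
  have hlower : ∀ t ≥ (0:ℝ), ∀ ℓ, (S 0 ℓ + I 0 ℓ + R 0 ℓ) * Real.exp (-c * t)
      ≤ S t ℓ + I t ℓ + R t ℓ := fun t ht ℓ =>
    mul_exp_neg_le_of_hasDerivWithinAt (B := fun t => S t ℓ + I t ℓ + R t ℓ)
      (fun x hx => hasDerivWithinAt_of_eq_add_integral (hflow_cont ℓ) (hmass ℓ) hx)
      (fun x hx => neg_mul_le_netInflow_add hνS hνI hνR (fun i => (hnonneg x hx i).2.1)
        (fun i => (hnonneg x hx i).2.2.1) (fun i => (hnonneg x hx i).2.2.2)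
        (hrow ℓ)) ht
  refine ⟨hlower, fun hpos T _ => ?_⟩
  obtain ⟨m, hm, hmle⟩ := exists_pos_forall_le_of_forall_pos fun ℓ =>
    mul_pos (hpos ℓ) (Real.exp_pos (-c * T))
  refine ⟨m, hm, fun t ht ℓ => (hmle ℓ).trans (le_trans ?_ (hlower t ht.1 ℓ))⟩
  exact mul_le_mul_of_nonneg_left (Real.exp_le_exp.2 (by nlinarith [ht.2])) (hpos ℓ).le

/-- **Key positivity estimate in the proof of Lemma 3.4**: the total patch masses
`B̄_ℓ = S̄_ℓ + Ī_ℓ + R̄_ℓ` of the FLLN limit system decay at most exponentially, hence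
remain bounded away from zero on compact time intervals. -/
theorem multiPatch_total_mass_lower_bound
    (L : ℕ) (hL : 1 ≤ L)
    (νS νI νR : Matrix (Fin L) (Fin L) ℝ)
    (hνS : ∀ ℓ ℓ', 0 ≤ νS ℓ ℓ') (hνI : ∀ ℓ ℓ', 0 ≤ νI ℓ ℓ')
    (hνR : ∀ ℓ ℓ', 0 ≤ νR ℓ ℓ')
    (Q : Matrix (Fin L) (Fin L) ℝ)
    (hQ_off : ∀ ℓ ℓ', ℓ ≠ ℓ' → Q ℓ ℓ' = νI ℓ ℓ')
    (hQ_diag : ∀ ℓ, Q ℓ ℓ = -∑ ℓ' ∈ Finset.univ.erase ℓ, νI ℓ ℓ')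
    (f : ℝ → ℝ) (hf_cont : Continuous f) (hf_nonneg : ∀ x, 0 ≤ f x)
    (hf_prob : ∫ u in Ioi (0:ℝ), f u = 1)
    (hFc_pos : ∀ x ≥ (0:ℝ), 0 < survival f x)
    (i₀ : ℝ → Fin L → ℝ) (hi₀_cont : ContinuousOn i₀ (Ici 0))
    (hi₀_nonneg : ∀ 𝔞 ≥ (0:ℝ), ∀ ℓ, 0 ≤ i₀ 𝔞 ℓ)
    (hi₀_int : IntegrableOn i₀ (Ioi 0))
    (v S I R : ℝ → Fin L → ℝ)
    (hv_cont : ContinuousOn v (Ici 0)) (hS_cont : ContinuousOn S (Ici 0))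
    (hI_cont : ContinuousOn I (Ici 0)) (hR_cont : ContinuousOn R (Ici 0))
    (hnonneg : ∀ t ≥ (0:ℝ), ∀ ℓ, 0 ≤ v t ℓ ∧ 0 ≤ S t ℓ ∧ 0 ≤ I t ℓ ∧ 0 ≤ R t ℓ)
    (heqS : ∀ t ≥ (0:ℝ), ∀ ℓ,
      S t ℓ = S 0 ℓ - (∫ s in (0:ℝ)..t, v s ℓ)
        + ∑ ℓ', ∫ s in (0:ℝ)..t, (νS ℓ' ℓ * S s ℓ' - νS ℓ ℓ' * S s ℓ))
    (heqI : ∀ t ≥ (0:ℝ), ∀ ℓ,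
      I t ℓ = (∫ 𝔞 in Ioi (0:ℝ), i₀ 𝔞 ℓ)
        - (∑ ℓ', ∫ 𝔞 in Ioi (0:ℝ),
            (∫ u in (0:ℝ)..t,
              NormedSpace.exp (u • Q) ℓ' ℓ * (f (u + 𝔞) / survival f 𝔞)) * i₀ 𝔞 ℓ')
        + (∫ s in (0:ℝ)..t, v s ℓ)
        - (∑ ℓ', ∫ s in (0:ℝ)..t,
            (∫ u in (0:ℝ)..(t - s), NormedSpace.exp (u • Q) ℓ' ℓ * f u) * v s ℓ')
        + ∑ ℓ', ∫ s in (0:ℝ)..t, (νI ℓ' ℓ * I s ℓ' - νI ℓ ℓ' * I s ℓ))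
    (heqR : ∀ t ≥ (0:ℝ), ∀ ℓ,
      R t ℓ = R 0 ℓ
        + (∑ ℓ', ∫ 𝔞 in Ioi (0:ℝ),
            (∫ u in (0:ℝ)..t,
              NormedSpace.exp (u • Q) ℓ' ℓ * (f (u + 𝔞) / survival f 𝔞)) * i₀ 𝔞 ℓ')
        + (∑ ℓ', ∫ s in (0:ℝ)..t,
            (∫ u in (0:ℝ)..(t - s), NormedSpace.exp (u • Q) ℓ' ℓ * f u) * v s ℓ')
        + ∑ ℓ', ∫ s in (0:ℝ)..t, (νR ℓ' ℓ * R s ℓ' - νR ℓ ℓ' * R s ℓ))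
    (hI0 : ∀ ℓ, I 0 ℓ = ∫ 𝔞 in Ioi (0:ℝ), i₀ 𝔞 ℓ) :
    (∀ t ≥ (0:ℝ), ∀ ℓ,
      (S 0 ℓ + I 0 ℓ + R 0 ℓ) *
          Real.exp (-(⨆ ℓ'' : Fin L, ∑ ℓ' ∈ Finset.univ.erase ℓ'',
            max (νS ℓ'' ℓ') (max (νI ℓ'' ℓ') (νR ℓ'' ℓ'))) * t)
        ≤ S t ℓ + I t ℓ + R t ℓ) ∧
    ((∀ ℓ, 0 < S 0 ℓ + I 0 ℓ + R 0 ℓ) →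
      ∀ T > (0:ℝ), ∃ cT > (0:ℝ), ∀ t ∈ Icc (0:ℝ) T, ∀ ℓ,
        cT ≤ S t ℓ + I t ℓ + R t ℓ) :=
  multiPatch_total_mass_lower_bound_general L νS νI νR hνS hνI hνR Q f i₀ v S I R hS_cont hI_cont
    hR_cont hnonneg heqS heqI heqR hI0
end

section
/- Let L ≥ 1 be a natural number and Q an L×L generator matrix. Let F be a cumulative distribution function on [0,∞) with F(0)=0 and F^c := 1−F satisfying F^c(x) > 0 for all x ≥ 0, with the convention F^c(x) := 1 for x < 0. Let λ̄ : [0,∞) → [0,∞) be bounded Borel measurable, let i₀ : [0,∞) → ℝ^L be Borel measurable and Lebesgue integrable, and let b : [0,∞) → ℝ^L be continuous (both row-vector valued). Define i : [0,∞)×[0,∞) → ℝ^L by i(t,𝔞) = (F^c(𝔞)/F^c(𝔞−t))·i₀(𝔞−t)·exp(tQ) if 0 ≤ t ≤ 𝔞, and i(t,𝔞) = F^c(𝔞)·b(t−𝔞)·exp(𝔞Q) if 0 ≤ 𝔞 < t. Then for every t ≥ 0, the following identity of row vectors in ℝ^L holds: (∫₀^∞ λ̄(𝔞+t)·i₀(𝔞)d𝔞)·exp(tQ)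 + ∫₀ᵗ λ̄(t−s)·b(s)·exp((t−s)Q) ds = ∫₀^∞ λ̄(u)·i(t,u)·(F^c((u−t)⁺)/F^c(u)) du. -/
/-!
After the substitution `u = 𝔞 + t` the first term of the left-hand side becomes the integral of
`λ̄(u) i₀(u - t) exp(tQ)` over `u > t`, and after `u = t - s` the second becomes the integral of
`λ̄(u) b(t - u) exp(uQ)` over `0 < u < t`. On each of these two ranges the explicit formula for
`i(t, u)` makes the survival-ratio weight `F^c((u - t)⁺) / F^c(u)` cancel, leaving exactly these
integrands; splitting `(0, ∞)` at `t` gives the identity.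
-/

open Matrix intervalIntegral Set MeasureTheory

section Translation

variable {E : Type*} [NormedAddCommGroup E]

lemma integrableOn_Ioi_comp_add_iff (f : ℝ → E) (t : ℝ) :
    IntegrableOn (fun a => f (a + t)) (Ioi 0) ↔ IntegrableOn f (Ioi t) := by
  have hemb : MeasurableEmbedding (fun a : ℝ => a + t) :=
    (Homeomorph.addRight t).isClosedEmbedding.measurableEmbedding
  have := (measurePreserving_add_right volume t).integrableOn_comp_preimage hemb (f := f)
    (s := Ioi t)
  rwa [preimage_add_const_Ioi, sub_self] at this

lemma setIntegral_Ioi_comp_add [NormedSpace ℝ E] (f : ℝ → E) (t : ℝ) :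
    ∫ a in Ioi 0, f (a + t) = ∫ u in Ioi t, f u := by
  have hemb : MeasurableEmbedding (fun a : ℝ => a + t) :=
    (Homeomorph.addRight t).isClosedEmbedding.measurableEmbedding
  rw [← (measurePreserving_add_right volume t).setIntegral_preimage_emb hemb f (Ioi t),
    preimage_add_const_Ioi, sub_self]

lemma setIntegral_Ioi_eq_of_eqOn_Ioo_of_eqOn_Ioi [NormedSpace ℝ E] {f g h : ℝ → E} {a b : ℝ}
    (hab : a ≤ b) (hg : IntegrableOn g (Ioo a b)) (hh : IntegrableOn h (Ioi b))
    (hfg : EqOn f g (Ioo a b)) (hfh : EqOn f h (Ioi b)) :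
    ∫ x in Ioi a, f x = (∫ x in Ioo a b, g x) + ∫ x in Ioi b, h x := by
  have hf₁ : IntegrableOn f (Ioc a b) :=
    (hg.congr_fun hfg.symm measurableSet_Ioo).congr_set_ae Ioo_ae_eq_Ioc.symm
  rw [← Ioc_union_Ioi_eq_Ioi hab, setIntegral_union (Ioc_disjoint_Ioi le_rfl) measurableSet_Ioi
    hf₁ (hh.congr_fun hfh.symm measurableSet_Ioi), integral_Ioc_eq_integral_Ioo,
    setIntegral_congr_fun measurableSet_Ioo hfg, setIntegral_congr_fun measurableSet_Ioi hfh]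

lemma intervalIntegral_comp_sub_left_eq_setIntegral_Ioo [NormedSpace ℝ E] (g : ℝ → E)
    {t : ℝ} (ht : 0 ≤ t) : ∫ s in (0:ℝ)..t, g (t - s) = ∫ u in Ioo 0 t, g u := by
  rw [intervalIntegral.integral_comp_sub_left, sub_self, sub_zero,
    intervalIntegral.integral_of_le ht, integral_Ioc_eq_integral_Ioo]

end Translation

lemma ContinuousOn.matrix_vecMul {X R m n : Type*} [Fintype m] [TopologicalSpace X]
    [TopologicalSpace R] [NonUnitalNonAssocSemiring R] [ContinuousAdd R] [ContinuousMul R]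
    {s : Set X} {A : X → m → R} {B : X → Matrix m n R} (hA : ContinuousOn A s)
    (hB : ContinuousOn B s) :
    ContinuousOn (fun x => A x ᵥ* B x) s := by
  rw [continuousOn_iff_continuous_domRestrict] at *
  exact hA.matrix_vecMul hB

namespace Matrix

variable {m n : Type*} [Fintype m] [Fintype n]

lemma continuous_exp_smul [DecidableEq n] (Q : Matrix n n ℝ) :
    Continuous fun u : ℝ => NormedSpace.exp (u • Q) := by
  let : NormedRing (Matrix n n ℝ) := Matrix.linftyOpNormedRing
  let : NormedAlgebra ℝ (Matrix n n ℝ) := Matrix.linftyOpNormedAlgebra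
  let : NormedAlgebra ℚ (Matrix n n ℝ) := NormedAlgebra.restrictScalars ℚ ℝ _
  exact NormedSpace.exp_continuous.comp (continuous_id.smul continuous_const)

lemma continuousOn_vecMul_exp_smul_comp_sub [DecidableEq n] {b : ℝ → n → ℝ}
    (hb : ContinuousOn b (Ici 0)) (Q : Matrix n n ℝ) (t : ℝ) :
    ContinuousOn (fun u => b (t - u) ᵥ* NormedSpace.exp (u • Q)) (Icc 0 t) :=
  (hb.comp (continuous_const.sub continuous_id).continuousOn
    fun u (hu : u ∈ Icc 0 t) => sub_nonneg.2 hu.2).matrix_vecMul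
    (continuous_exp_smul Q).continuousOn

variable {α : Type*} [MeasurableSpace α] {μ : Measure α} {f : α → m → ℝ}

lemma _root_.MeasureTheory.Integrable.vecMul (hf : Integrable f μ) (M : Matrix m n ℝ) :
    Integrable (fun x => f x ᵥ* M) μ :=
  (LinearMap.toContinuousLinearMap M.vecMulLinear).integrable_comp hf

lemma integral_vecMul (hf : Integrable f μ) (M : Matrix m n ℝ) :
    (∫ x, f x ∂μ) ᵥ* M = ∫ x, f x ᵥ* M ∂μ :=
  ((LinearMap.toContinuousLinearMap M.vecMulLinear).integral_comp_comm hf).symm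

end Matrix

theorem boundary_condition_equivalence_general
    (L : ℕ) (Q : Matrix (Fin L) (Fin L) ℝ)
    (F : ℝ → ℝ) (hF_zero : ∀ x ≤ (0:ℝ), F x = 0)
    (hFc_pos : ∀ x ≥ (0:ℝ), F x < 1)
    (lam : ℝ → ℝ) (lamStar : ℝ) (hlam_meas : Measurable lam)
    (hlam : ∀ x, lam x ∈ Icc (0:ℝ) lamStar)
    (i₀ : ℝ → Fin L → ℝ)
    (hi₀_int : IntegrableOn i₀ (Ioi 0))
    (b : ℝ → Fin L → ℝ) (hb : ContinuousOn b (Ici 0))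
    (i : ℝ → ℝ → Fin L → ℝ)
    (hi_le : ∀ t 𝔞 : ℝ, 0 ≤ t → t ≤ 𝔞 →
      i t 𝔞 = ((1 - F 𝔞) / (1 - F (𝔞 - t))) •
        ((i₀ (𝔞 - t)) ᵥ* NormedSpace.exp (t • Q)))
    (hi_gt : ∀ t 𝔞 : ℝ, 0 ≤ 𝔞 → 𝔞 < t →
      i t 𝔞 = (1 - F 𝔞) • ((b (t - 𝔞)) ᵥ* NormedSpace.exp (𝔞 • Q))) :
    ∀ t ≥ (0:ℝ),
      (∫ 𝔞 in Ioi (0:ℝ), lam (𝔞 + t) • i₀ 𝔞) ᵥ* NormedSpace.exp (t • Q)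
        + (∫ s in (0:ℝ)..t, lam (t - s) • ((b s) ᵥ* NormedSpace.exp ((t - s) • Q)))
      = ∫ u in Ioi (0:ℝ), (lam u * ((1 - F (max (u - t) 0)) / (1 - F u))) • i t u := by
  intro t ht
  set E := NormedSpace.exp (t • Q)
  have hFc : ∀ x ≥ (0:ℝ), 1 - F x ≠ 0 := fun x hx => (sub_pos.2 (hFc_pos x hx)).ne'
  have hlam_bdd : ∀ x, ‖lam x‖ ≤ lamStar := fun x => by
    rw [Real.norm_of_nonneg (hlam x).1]; exact (hlam x).2
  have h_far : EqOn (fun u => (lam u * ((1 - F (max (u - t) 0)) / (1 - F u))) • i t u)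
      (fun u => lam u • (i₀ (u - t) ᵥ* E)) (Ioi t) := fun u (hu : t < u) => by
    have hu₀ : 0 ≤ u - t := by linarith
    dsimp only
    rw [hi_le t u ht hu.le, max_eq_left hu₀, smul_smul]
    congr 1
    field_simp [hFc u (by linarith), hFc (u - t) hu₀]
  have h_near : EqOn (fun u => (lam u * ((1 - F (max (u - t) 0)) / (1 - F u))) • i t u)
      (fun u => lam u • (b (t - u) ᵥ* NormedSpace.exp (u • Q))) (Ioo 0 t) := fun u hu => by
    dsimp only
    rw [hi_gt t u hu.1.le hu.2, max_eq_right (by linarith [hu.2]), hF_zero 0 le_rfl, smul_smul]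
    congr 1
    field_simp [hFc u hu.1.le]
    ring
  have h_shift_int : IntegrableOn (fun a => lam (a + t) • i₀ a) (Ioi 0) :=
    hi₀_int.bdd_smul lamStar (hlam_meas.comp (measurable_add_const t)).aestronglyMeasurable
      (ae_of_all _ fun a => hlam_bdd (a + t))
  have h_far_int : IntegrableOn (fun u => lam u • (i₀ (u - t) ᵥ* E)) (Ioi t) := by
    rw [← integrableOn_Ioi_comp_add_iff]
    simp only [add_sub_cancel_right, ← smul_vecMul]
    exact h_shift_int.vecMul E
  have h_near_int :
      IntegrableOn (fun u => lam u • (b (t - u) ᵥ* NormedSpace.exp (u • Q))) (Ioo 0 t) :=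
    (((continuousOn_vecMul_exp_smul_comp_sub hb Q t).integrableOn_compact isCompact_Icc).mono_set
      Ioo_subset_Icc_self).bdd_smul lamStar hlam_meas.aestronglyMeasurable
      (ae_of_all _ fun u => hlam_bdd u)
  rw [setIntegral_Ioi_eq_of_eqOn_Ioo_of_eqOn_Ioi ht h_near_int h_far_int h_near h_far, add_comm]
  congr 1
  · simpa only [sub_sub_cancel] using intervalIntegral_comp_sub_left_eq_setIntegral_Ioo
      (fun u => lam u • (b (t - u) ᵥ* NormedSpace.exp (u • Q))) ht
  · rw [Matrix.integral_vecMul h_shift_int E, ← setIntegral_Ioi_comp_add _ t]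
    simp only [add_sub_cancel_right, smul_vecMul]

/-- **Equivalence of the two formulations (3.2) and (3.6) of the boundary condition**
in the proof of Theorem 3.1.  Here `F` is a c.d.f. on `[0,∞)` (extended by `0` on
`(-∞,0)`, so that `F^c = 1 - F` equals `1` there), and `i` is given by the explicit
formulas (3.4)–(3.5). -/
theorem boundary_condition_equivalence
    (L : ℕ) (hL : 1 ≤ L) (Q : Matrix (Fin L) (Fin L) ℝ) (hQ : IsGeneratorMatrix Q)
    (F : ℝ → ℝ) (hF_zero : ∀ x ≤ (0:ℝ), F x = 0) (hF_mono : Monotone F)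
    (hF_le : ∀ x, F x ≤ 1)
    (hF_rc : ∀ x, ContinuousWithinAt F (Ici x) x)
    (hFc_pos : ∀ x ≥ (0:ℝ), F x < 1)
    (lam : ℝ → ℝ) (lamStar : ℝ) (hlam_meas : Measurable lam)
    (hlam : ∀ x, lam x ∈ Icc (0:ℝ) lamStar)
    (i₀ : ℝ → Fin L → ℝ) (hi₀_meas : Measurable i₀)
    (hi₀_int : IntegrableOn i₀ (Ioi 0))
    (b : ℝ → Fin L → ℝ) (hb : ContinuousOn b (Ici 0))
    (i : ℝ → ℝ → Fin L → ℝ)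
    (hi_le : ∀ t 𝔞 : ℝ, 0 ≤ t → t ≤ 𝔞 →
      i t 𝔞 = ((1 - F 𝔞) / (1 - F (𝔞 - t))) •
        ((i₀ (𝔞 - t)) ᵥ* NormedSpace.exp (t • Q)))
    (hi_gt : ∀ t 𝔞 : ℝ, 0 ≤ 𝔞 → 𝔞 < t →
      i t 𝔞 = (1 - F 𝔞) • ((b (t - 𝔞)) ᵥ* NormedSpace.exp (𝔞 • Q))) :
    ∀ t ≥ (0:ℝ),
      (∫ 𝔞 in Ioi (0:ℝ), lam (𝔞 + t) • i₀ 𝔞) ᵥ* NormedSpace.exp (t • Q)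
        + (∫ s in (0:ℝ)..t, lam (t - s) • ((b s) ᵥ* NormedSpace.exp ((t - s) • Q)))
      = ∫ u in Ioi (0:ℝ), (lam u * ((1 - F (max (u - t) 0)) / (1 - F u))) • i t u :=
  boundary_condition_equivalence_general L Q F hF_zero hFc_pos lam lamStar hlam_meas hlam i₀ hi₀_int
    b hb i hi_le hi_gt
end

section
/- Let L ≥ 1 be a natural number and Q an L×L generator matrix with p(u) := exp(uQ). Let f : [0,∞) → [0,∞) be a continuous probability density with F(x) := ∫₀ˣ f(u)du and F^c := 1−F satisfying F^c(x) > 0 for all x ≥ 0. Let Ῡ : [0,∞) → ℝ^L and ī₀ : [0,∞) → ℝ^L be continuous (row-vector valued), and suppose Ī : [0,∞)×[0,∞) → ℝ^L is continuous and satisfies, for all t, 𝔞 ≥ 0: Ī(t,𝔞) = ∫₀^{(𝔞−t)⁺} ī₀(y)dy − ∫₀^{(𝔞−t)⁺} ∫₀ᵗ (f(u+y)/F^c(y))·ī₀(y)·exp(uQ) du dy + ∫_{(t−𝔞)⁺}^{t} Ῡ(s)ds − ∫_{(t−𝔞)⁺}^{t} ∫₀^{t−s} f(u)·Ῡ(s)·exp(uQ)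 du ds + ∫_{(t−𝔞)⁺}^{t} Ī(s, 𝔞−(t−s))·Q ds. Then for every (t,𝔞) with t > 0 and 𝔞 > 0, the directional derivative of Ī at (t,𝔞) in the direction (1,1) exists and equals −∫₀^{(𝔞−t)⁺} (f(t+y)/F^c(y))·ī₀(y)·exp(tQ) dy + Ῡ(t) − ∫_{(t−𝔞)⁺}^{t} f(t−s)·Ῡ(s)·exp((t−s)Q) ds + Ī(t,𝔞)·Q. -/
open Matrix intervalIntegral Set MeasureTheory

open Filter Topology

/-!
Along the characteristic `h ↦ (t + h, 𝔞 + h)` the truncation points `(𝔞 - t)⁺` and `(t - 𝔞)⁺` of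
the integral equation stay fixed, so every term of its right-hand side is an integral
`∫ s in b..t + h, G (t + h) s` (or one with fixed limits) and the Leibniz integral rule
differentiates it. In the arrival term the boundary contribution `G t t` is an integral over
`[0, t - t]` and vanishes. The data are only continuous on `[0, ∞)`; composed with `x ↦ max x 0`
they become continuous on `ℝ` without changing the equation at nonnegative arguments, and
`F^c ≥ 1` on `(-∞, 0]` because `f ≥ 0`.
-/

section Leibniz

variable {E : Type*} [NormedAddCommGroup E] [NormedSpace ℝ E]

theorem hasDerivAt_integral_param {F F' : ℝ → ℝ → E} (hF : ∀ x, Continuous (F x))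
    (hF' : Continuous (Function.uncurry F'))
    (hderiv : ∀ x s, HasDerivAt (fun x => F x s) (F' x s) x) (a b x₀ : ℝ) :
    HasDerivAt (fun x => ∫ s in a..b, F x s) (∫ s in a..b, F' x₀ s) x₀ := by
  obtain ⟨M, hM⟩ := ((isCompact_closedBall x₀ 1).prod (isCompact_uIcc (a := a) (b := b)))
    |>.exists_bound_of_continuousOn hF'.continuousOn
  refine (hasDerivAt_integral_of_dominated_loc_of_deriv_le (bound := fun _ => M)
    (Metric.ball_mem_nhds x₀ one_pos) (Eventually.of_forall fun x => (hF x).aestronglyMeasurable)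
    ((hF x₀).intervalIntegrable a b)
    (hF'.comp (continuous_const.prodMk continuous_id)).aestronglyMeasurable ?_
    intervalIntegrable_const (ae_of_all _ fun s _ x _ => hderiv x s)).2
  exact ae_of_all _ fun s hs x hx =>
    hM (x, s) ⟨Metric.ball_subset_closedBall hx, uIoc_subset_uIcc hs⟩

theorem hasDerivAt_integral_param_upper_self [CompleteSpace E] {F : ℝ → ℝ → E}
    (hF : Continuous (Function.uncurry F)) (x₀ : ℝ) :
    HasDerivAt (fun x => ∫ s in x₀..x, F x s) (F x₀ x₀) x₀ := by
  rw [hasDerivAt_iff_isLittleO, Asymptotics.isLittleO_iff]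
  intro ε hε
  obtain ⟨δ, hδ, hclose⟩ := Metric.continuousAt_iff.mp (hF.continuousAt (x := (x₀, x₀))) ε hε
  filter_upwards [Metric.ball_mem_nhds x₀ hδ] with x hx
  have hint : IntervalIntegrable (F x) volume x₀ x :=
    (hF.comp (continuous_const.prodMk continuous_id)).intervalIntegrable _ _
  have hsplit : (∫ s in x₀..x, F x s) - (∫ s in x₀..x₀, F x₀ s) - (x - x₀) • F x₀ x₀
      = ∫ s in x₀..x, (F x s - F x₀ x₀) := by
    rw [integral_same, sub_zero, integral_sub hint intervalIntegrable_const,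
      intervalIntegral.integral_const]
  rw [hsplit, Real.norm_eq_abs]
  refine intervalIntegral.norm_integral_le_of_norm_le_const fun s hs => ?_
  rw [← dist_eq_norm]
  refine (hclose (x := (x, s)) ?_).le
  have hsx : dist s x₀ ≤ dist x x₀ := abs_sub_left_of_mem_uIcc (uIoc_subset_uIcc hs)
  rw [Prod.dist_eq, max_lt_iff]
  exact ⟨hx, hsx.trans_lt hx⟩

theorem hasDerivAt_integral_param_upper [CompleteSpace E] {F F' : ℝ → ℝ → E}
    (hF : Continuous (Function.uncurry F)) (hF' : Continuous (Function.uncurry F'))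
    (hderiv : ∀ x s, HasDerivAt (fun x => F x s) (F' x s) x) (a x₀ : ℝ) :
    HasDerivAt (fun x => ∫ s in a..x, F x s) ((∫ s in a..x₀, F' x₀ s) + F x₀ x₀) x₀ := by
  have hFx : ∀ x, Continuous (F x) := fun x => hF.comp (continuous_const.prodMk continuous_id)
  have hsplit : (fun x => ∫ s in a..x, F x s)
      = fun x => (∫ s in a..x₀, F x s) + ∫ s in x₀..x, F x s :=
    funext fun x =>
      (integral_add_adjacent_intervals ((hFx x).intervalIntegrable _ _)
        ((hFx x).intervalIntegrable _ _)).symm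
  rw [hsplit]
  exact (hasDerivAt_integral_param hFx hF' hderiv a x₀ x₀).add
    (hasDerivAt_integral_param_upper_self hF x₀)

end Leibniz

theorem eqOn_comp_max_zero {X : Type*} (g : ℝ → X) : EqOn (fun x => g (max x 0)) g (Ici 0) :=
  fun _ hx => congrArg g (max_eq_left hx)

theorem ContinuousOn.comp_max_zero {X : Type*} [TopologicalSpace X] {g : ℝ → X}
    (hg : ContinuousOn g (Ici 0)) : Continuous fun x => g (max x 0) :=
  hg.comp_continuous (continuous_id.max continuous_const) fun x => mem_Ici.mpr (le_max_right x 0)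

theorem ContinuousOn.uncurry_comp_max_zero {X : Type*} [TopologicalSpace X] {g : ℝ → ℝ → X}
    (hg : ContinuousOn (fun p : ℝ × ℝ => g p.1 p.2) (Ici 0 ×ˢ Ici 0)) :
    Continuous (Function.uncurry fun s a => g (max s 0) (max a 0)) :=
  hg.comp_continuous ((continuous_fst.max continuous_const).prodMk
    (continuous_snd.max continuous_const)) fun p =>
    ⟨mem_Ici.mpr (le_max_right p.1 0), mem_Ici.mpr (le_max_right p.2 0)⟩

theorem Matrix.continuous_exp_smul_s11 {L : ℕ} (Q : Matrix (Fin L) (Fin L) ℝ) :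
    Continuous fun u : ℝ => NormedSpace.exp (u • Q) := by
  let _ : NormedRing (Matrix (Fin L) (Fin L) ℝ) := Matrix.linftyOpNormedRing
  let _ : NormedAlgebra ℝ (Matrix (Fin L) (Fin L) ℝ) := Matrix.linftyOpNormedAlgebra
  let _ : NormedAlgebra ℚ (Matrix (Fin L) (Fin L) ℝ) := NormedAlgebra.restrictScalars ℚ ℝ _
  exact NormedSpace.exp_continuous.comp (continuous_id.smul continuous_const)

section Survival

variable {f : ℝ → ℝ}

theorem continuous_survival (hf : Continuous f) : Continuous (survival f) :=
  continuous_const.sub (continuous_primitive (fun _ _ => hf.intervalIntegrable _ _) 0)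

theorem one_le_survival_of_nonpos (hf : ∀ x, 0 ≤ f x) {x : ℝ} (hx : x ≤ 0) :
    1 ≤ survival f x := by
  rw [survival, integral_symm, sub_neg_eq_add, le_add_iff_nonneg_right]
  exact integral_nonneg hx fun u _ => hf u

theorem survival_ne_zero (hf : ∀ x, 0 ≤ f x) (hpos : ∀ x ≥ 0, 0 < survival f x) (x : ℝ) :
    survival f x ≠ 0 := by
  rcases le_total 0 x with hx | hx
  · exact (hpos x hx).ne'
  · linarith [one_le_survival_of_nonpos hf hx]

end Survival

section IntegralEquation

variable {L : ℕ} (Q : Matrix (Fin L) (Fin L) ℝ) (f : ℝ → ℝ)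

/-- Infected of initial age `y` recover `u` time units later with the conditional density
`f (u + y) / F^c (y)`, their state having meanwhile evolved by `exp (u Q)`. -/
noncomputable def initialKernel (i₀ : ℝ → Fin L → ℝ) (u y : ℝ) : Fin L → ℝ :=
  (f (u + y) / survival f y) • (i₀ y ᵥ* NormedSpace.exp (u • Q))

noncomputable def arrivalKernel (Υ : ℝ → Fin L → ℝ) (u s : ℝ) : Fin L → ℝ :=
  f u • (Υ s ᵥ* NormedSpace.exp (u • Q))

noncomputable def integralEquationRHS (i₀ Υ : ℝ → Fin L → ℝ) (I : ℝ → ℝ → Fin L → ℝ)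
    (t 𝔞 : ℝ) : Fin L → ℝ :=
  (∫ y in (0:ℝ)..max (𝔞 - t) 0, i₀ y)
    - (∫ y in (0:ℝ)..max (𝔞 - t) 0, ∫ u in (0:ℝ)..t, initialKernel Q f i₀ u y)
    + (∫ s in max (t - 𝔞) 0..t, Υ s)
    - (∫ s in max (t - 𝔞) 0..t, ∫ u in (0:ℝ)..(t - s), arrivalKernel Q f Υ u s)
    + ∫ s in max (t - 𝔞) 0..t, I s (𝔞 - (t - s)) ᵥ* Q

noncomputable def transportDerivative (i₀ Υ : ℝ → Fin L → ℝ) (I : ℝ → ℝ → Fin L → ℝ)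
    (t 𝔞 : ℝ) : Fin L → ℝ :=
  -(∫ y in (0:ℝ)..max (𝔞 - t) 0, initialKernel Q f i₀ t y)
    + Υ t
    - (∫ s in max (t - 𝔞) 0..t, arrivalKernel Q f Υ (t - s) s)
    + I t 𝔞 ᵥ* Q

variable {Q f}

theorem continuous_initialKernel {i₀ : ℝ → Fin L → ℝ} (hf : Continuous f)
    (hsurv : ∀ x, survival f x ≠ 0) (hi₀ : Continuous i₀) :
    Continuous (Function.uncurry (initialKernel Q f i₀)) :=
  ((hf.comp (continuous_fst.add continuous_snd)).div
      ((continuous_survival hf).comp continuous_snd) fun p => hsurv p.2).smul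
    ((hi₀.comp continuous_snd).matrix_vecMul ((continuous_exp_smul_s11 Q).comp continuous_fst))

theorem continuous_arrivalKernel {Υ : ℝ → Fin L → ℝ} (hf : Continuous f) (hΥ : Continuous Υ) :
    Continuous (Function.uncurry (arrivalKernel Q f Υ)) :=
  (hf.comp continuous_fst).smul
    ((hΥ.comp continuous_snd).matrix_vecMul ((continuous_exp_smul_s11 Q).comp continuous_fst))

theorem nonneg_of_mem_uIcc_zero_max {c y : ℝ} (hy : y ∈ uIcc 0 (max c 0)) : 0 ≤ y := by
  rw [uIcc_of_le (le_max_right _ _)] at hy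
  exact hy.1

theorem nonneg_of_mem_uIcc_max_sub {t 𝔞 s : ℝ} (ht : 0 ≤ t) (h𝔞 : 0 ≤ 𝔞)
    (hs : s ∈ uIcc (max (t - 𝔞) 0) t) : 0 ≤ s ∧ 0 ≤ 𝔞 - (t - s) := by
  rw [uIcc_of_le (max_le (by linarith) ht), mem_Icc, max_le_iff] at hs
  constructor <;> linarith [hs.1.1, hs.1.2]

theorem integralEquationRHS_congr {i₀ i₀' Υ Υ' : ℝ → Fin L → ℝ} {I I' : ℝ → ℝ → Fin L → ℝ}
    (hi₀ : EqOn i₀ i₀' (Ici 0)) (hΥ : EqOn Υ Υ' (Ici 0))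
    (hI : ∀ s ≥ 0, ∀ a ≥ 0, I s a = I' s a) {t 𝔞 : ℝ} (ht : 0 ≤ t) (h𝔞 : 0 ≤ 𝔞) :
    integralEquationRHS Q f i₀ Υ I t 𝔞 = integralEquationRHS Q f i₀' Υ' I' t 𝔞 := by
  unfold integralEquationRHS
  congr 1; congr 1; congr 1; congr 1
  · exact integral_congr fun y hy => hi₀ (nonneg_of_mem_uIcc_zero_max hy)
  · exact integral_congr fun y hy => by
      simp only [initialKernel, hi₀ (nonneg_of_mem_uIcc_zero_max hy)]
  · exact integral_congr fun s hs => hΥ (nonneg_of_mem_uIcc_max_sub ht h𝔞 hs).1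
  · exact integral_congr fun s hs => by
      simp only [arrivalKernel, hΥ (nonneg_of_mem_uIcc_max_sub ht h𝔞 hs).1]
  · exact integral_congr fun s hs => by
      obtain ⟨hs₀, ha₀⟩ := nonneg_of_mem_uIcc_max_sub ht h𝔞 hs
      simp only [hI s hs₀ _ ha₀]

theorem transportDerivative_congr {i₀ i₀' Υ Υ' : ℝ → Fin L → ℝ} {I I' : ℝ → ℝ → Fin L → ℝ}
    (hi₀ : EqOn i₀ i₀' (Ici 0)) (hΥ : EqOn Υ Υ' (Ici 0))
    (hI : ∀ s ≥ 0, ∀ a ≥ 0, I s a = I' s a) {t 𝔞 : ℝ} (ht : 0 ≤ t) (h𝔞 : 0 ≤ 𝔞) :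
    transportDerivative Q f i₀ Υ I t 𝔞 = transportDerivative Q f i₀' Υ' I' t 𝔞 := by
  unfold transportDerivative
  rw [hΥ ht, hI t ht 𝔞 h𝔞]
  congr 1; congr 1; congr 2
  · exact integral_congr fun y hy => by
      simp only [initialKernel, hi₀ (nonneg_of_mem_uIcc_zero_max hy)]
  · exact integral_congr fun s hs => by
      simp only [arrivalKernel, hΥ (nonneg_of_mem_uIcc_max_sub ht h𝔞 hs).1]

theorem hasDerivAt_integralEquationRHS_characteristic {i₀ Υ : ℝ → Fin L → ℝ}
    {I : ℝ → ℝ → Fin L → ℝ} (hf : Continuous f) (hsurv : ∀ x, survival f x ≠ 0)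
    (hi₀ : Continuous i₀) (hΥ : Continuous Υ) (hI : Continuous (Function.uncurry I)) (c t : ℝ) :
    HasDerivAt (fun T => integralEquationRHS Q f i₀ Υ I T (c + T))
      (transportDerivative Q f i₀ Υ I t (c + t)) t := by
  have hK₁ := continuous_initialKernel (Q := Q) hf hsurv hi₀
  have hK₂ := continuous_arrivalKernel (Q := Q) hf hΥ
  have hinitial : HasDerivAt
      (fun T => ∫ y in (0:ℝ)..max c 0, ∫ u in (0:ℝ)..T, initialKernel Q f i₀ u y)
      (∫ y in (0:ℝ)..max c 0, initialKernel Q f i₀ t y) t :=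
    hasDerivAt_integral_param
      (fun T => continuous_parametric_intervalIntegral_of_continuous'
        (f := fun y u => initialKernel Q f i₀ u y) (hK₁.comp continuous_swap) 0 T)
      hK₁ (fun T y => ((hK₁.uncurry_right y).integral_hasStrictDerivAt 0 T).hasDerivAt) _ _ t
  have harrival : HasDerivAt
      (fun T => ∫ s in max (-c) 0..T, ∫ u in (0:ℝ)..(T - s), arrivalKernel Q f Υ u s)
      (∫ s in max (-c) 0..t, arrivalKernel Q f Υ (t - s) s) t := by
    simpa only [sub_self, integral_same, add_zero] using hasDerivAt_integral_param_upper
      (F := fun T s => ∫ u in (0:ℝ)..(T - s), arrivalKernel Q f Υ u s)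
      (F' := fun T s => arrivalKernel Q f Υ (T - s) s)
      (continuous_parametric_intervalIntegral_of_continuous
        (f := fun (p : ℝ × ℝ) u => arrivalKernel Q f Υ u p.2) (s := fun p => p.1 - p.2)
        (hK₂.comp (continuous_snd.prodMk (continuous_snd.comp continuous_fst)))
        (continuous_fst.sub continuous_snd))
      (hK₂.comp ((continuous_fst.sub continuous_snd).prodMk continuous_snd))
      (fun T s => ((hK₂.uncurry_right s).integral_hasStrictDerivAt 0 (T - s)).hasDerivAt
        |>.comp_sub_const T s) _ t
  have htransition :
      HasDerivAt (fun T => ∫ s in max (-c) 0..T, I s (c + s) ᵥ* Q) (I t (c + t) ᵥ* Q) t :=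
    ((hI.comp (continuous_id.prodMk (continuous_const.add continuous_id))).matrix_vecMul
      continuous_const |>.integral_hasStrictDerivAt _ t).hasDerivAt
  have hsum := (((hasDerivAt_const t (∫ y in (0:ℝ)..max c 0, i₀ y)).sub hinitial).add
    ((hΥ.integral_hasStrictDerivAt (max (-c) 0) t).hasDerivAt)).sub harrival |>.add htransition
  rw [zero_sub] at hsum
  simp only [integralEquationRHS, transportDerivative, add_sub_cancel_right, sub_add_cancel_right,
    show ∀ T s, c + T - (T - s) = c + s from fun T s => by ring]
  exact hsum

end IntegralEquation

theorem limit_mfI_transport_equation_general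
    (L : ℕ) (Q : Matrix (Fin L) (Fin L) ℝ)
    (f : ℝ → ℝ) (hf_cont : Continuous f) (hf_nonneg : ∀ x, 0 ≤ f x)
    (hFc_pos : ∀ x ≥ (0:ℝ), 0 < survival f x)
    (Υ i₀ : ℝ → Fin L → ℝ)
    (hΥ : ContinuousOn Υ (Ici 0)) (hi₀ : ContinuousOn i₀ (Ici 0))
    (I : ℝ → ℝ → Fin L → ℝ)
    (hI_cont : ContinuousOn (fun p : ℝ × ℝ => I p.1 p.2) (Ici 0 ×ˢ Ici 0))
    (heq : ∀ t ≥ (0:ℝ), ∀ 𝔞 ≥ (0:ℝ),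
      I t 𝔞 = (∫ y in (0:ℝ)..(max (𝔞 - t) 0), i₀ y)
        - (∫ y in (0:ℝ)..(max (𝔞 - t) 0), ∫ u in (0:ℝ)..t,
            (f (u + y) / survival f y) • ((i₀ y) ᵥ* NormedSpace.exp (u • Q)))
        + (∫ s in (max (t - 𝔞) 0)..t, Υ s)
        - (∫ s in (max (t - 𝔞) 0)..t, ∫ u in (0:ℝ)..(t - s),
            f u • ((Υ s) ᵥ* NormedSpace.exp (u • Q)))
        + ∫ s in (max (t - 𝔞) 0)..t, (I s (𝔞 - (t - s))) ᵥ* Q) :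
    ∀ t > (0:ℝ), ∀ 𝔞 > (0:ℝ),
      HasDerivAt (fun h : ℝ => I (t + h) (𝔞 + h))
        (-(∫ y in (0:ℝ)..(max (𝔞 - t) 0),
            (f (t + y) / survival f y) • ((i₀ y) ᵥ* NormedSpace.exp (t • Q)))
          + Υ t
          - (∫ s in (max (t - 𝔞) 0)..t,
              f (t - s) • ((Υ s) ᵥ* NormedSpace.exp ((t - s) • Q)))
          + (I t 𝔞) ᵥ* Q) 0 := by
  intro t ht 𝔞 h𝔞
  have hI_clamp : ∀ s ≥ (0:ℝ), ∀ a ≥ (0:ℝ), I (max s 0) (max a 0) = I s a :=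
    fun s hs a ha => by rw [max_eq_left hs, max_eq_left ha]
  have hRHS := hasDerivAt_integralEquationRHS_characteristic (Q := Q) hf_cont
    (survival_ne_zero hf_nonneg hFc_pos)
    hi₀.comp_max_zero hΥ.comp_max_zero hI_cont.uncurry_comp_max_zero (𝔞 - t) t
  rw [sub_add_cancel, transportDerivative_congr (eqOn_comp_max_zero i₀) (eqOn_comp_max_zero Υ)
    hI_clamp ht.le h𝔞.le] at hRHS
  have hchar : (fun T => I T (𝔞 - t + T)) =ᶠ[𝓝 t]
      fun T => integralEquationRHS Q f (fun y => i₀ (max y 0)) (fun s => Υ (max s 0))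
        (fun s a => I (max s 0) (max a 0)) T (𝔞 - t + T) := by
    filter_upwards [eventually_gt_nhds ht, eventually_gt_nhds (sub_lt_self t h𝔞)] with T hT hT'
    exact (heq T hT.le _ (by linarith)).trans (integralEquationRHS_congr (eqOn_comp_max_zero i₀)
      (eqOn_comp_max_zero Υ) hI_clamp hT.le (by linarith)).symm
  have hshift : HasDerivAt (fun T => I T (𝔞 - t + T)) (transportDerivative Q f i₀ Υ I t 𝔞)
      (t + 0) := by
    rw [add_zero]
    exact hRHS.congr_of_eventuallyEq hchar
  replace hshift := hshift.comp_const_add t 0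
  simp only [show ∀ x, 𝔞 - t + (t + x) = 𝔞 + x from fun x => by ring] at hshift
  exact hshift

/-- **Equation (3.11)** in the derivation of the PDE model in Theorem 3.1: the FLLN
limit `Ī(t,𝔞)` satisfies a first-order transport equation along the direction `(1,1)`. -/
theorem limit_mfI_transport_equation
    (L : ℕ) (hL : 1 ≤ L) (Q : Matrix (Fin L) (Fin L) ℝ) (hQ : IsGeneratorMatrix Q)
    (f : ℝ → ℝ) (hf_cont : Continuous f) (hf_nonneg : ∀ x, 0 ≤ f x)
    (hf_prob : ∫ u in Ioi (0:ℝ), f u = 1)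
    (hFc_pos : ∀ x ≥ (0:ℝ), 0 < survival f x)
    (Υ i₀ : ℝ → Fin L → ℝ)
    (hΥ : ContinuousOn Υ (Ici 0)) (hi₀ : ContinuousOn i₀ (Ici 0))
    (I : ℝ → ℝ → Fin L → ℝ)
    (hI_cont : ContinuousOn (fun p : ℝ × ℝ => I p.1 p.2) (Ici 0 ×ˢ Ici 0))
    (heq : ∀ t ≥ (0:ℝ), ∀ 𝔞 ≥ (0:ℝ),
      I t 𝔞 = (∫ y in (0:ℝ)..(max (𝔞 - t) 0), i₀ y)
        - (∫ y in (0:ℝ)..(max (𝔞 - t) 0), ∫ u in (0:ℝ)..t,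
            (f (u + y) / survival f y) • ((i₀ y) ᵥ* NormedSpace.exp (u • Q)))
        + (∫ s in (max (t - 𝔞) 0)..t, Υ s)
        - (∫ s in (max (t - 𝔞) 0)..t, ∫ u in (0:ℝ)..(t - s),
            f u • ((Υ s) ᵥ* NormedSpace.exp (u • Q)))
        + ∫ s in (max (t - 𝔞) 0)..t, (I s (𝔞 - (t - s))) ᵥ* Q) :
    ∀ t > (0:ℝ), ∀ 𝔞 > (0:ℝ),
      HasDerivAt (fun h : ℝ => I (t + h) (𝔞 + h))
        (-(∫ y in (0:ℝ)..(max (𝔞 - t) 0),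
            (f (t + y) / survival f y) • ((i₀ y) ᵥ* NormedSpace.exp (t • Q)))
          + Υ t
          - (∫ s in (max (t - 𝔞) 0)..t,
              f (t - s) • ((Υ s) ᵥ* NormedSpace.exp ((t - s) • Q)))
          + (I t 𝔞) ᵥ* Q) 0 :=
  limit_mfI_transport_equation_general L Q f hf_cont hf_nonneg hFc_pos Υ i₀ hΥ hi₀ I hI_cont heq
end
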